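/- arXiv:2109.11669 — 5 statements merged into one kernel-verified Lean document; each statement's English description precedes it below -/
import Mathlib

section
/- Let p ≥ 1, let μ and ν be probability measures on ℝ^d having densities f and g with respect to Lebesgue measure and finite p-th moments, and let M ≥ 1 satisfy f(x) ≤ M·g(x) for Lebesgue-almost every x. Then W_p(μ,ν)^p ≤ ∫∫ |x−y|^p μ(dx)ν(dy) − (1/M)·∫∫ |x−y|^p μ(dx)μ(dy). -/
open MeasureTheory

noncomputable section

abbrev Euc (d : ℕ) := EuclideanSpace ℝ (Fin d)

/-- `W_p(μ,ν)^p`: the infimum of `∫ |x−y|^p dπ` over all probability couplings `π`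
of `μ` and `ν`. -/
def WassersteinPow {d : ℕ} (p : ℝ) (μ ν : Measure (Euc d)) : ℝ :=
  sInf { r : ℝ | ∃ cpl : Measure (Euc d × Euc d), IsProbabilityMeasure cpl ∧
    cpl.map Prod.fst = μ ∧ cpl.map Prod.snd = ν ∧ r = ∫ q, dist q.1 q.2 ^ p ∂cpl }

lemma aux_rpow_bound (p a b : ℝ) (hp : 1 ≤ p) (ha : 0 ≤ a) (hb : 0 ≤ b) :
    (a + b) ^ p ≤ 2 ^ p * (a ^ p + b ^ p) := by
  have h0p : (0:ℝ) ≤ p := by linarith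
  have h1 : a + b ≤ 2 * max a b := by
    rcases le_total a b with h | h
    · rw [max_eq_right h]; linarith
    · rw [max_eq_left h]; linarith
  have hmax : (max a b) ^ p ≤ a ^ p + b ^ p := by
    rcases le_total a b with h | h
    · rw [max_eq_right h]
      exact le_add_of_nonneg_left (Real.rpow_nonneg ha _)
    · rw [max_eq_left h]
      exact le_add_of_nonneg_right (Real.rpow_nonneg hb _)
  calc (a + b) ^ p ≤ (2 * max a b) ^ p :=
        Real.rpow_le_rpow (by positivity) h1 h0p
    _ = 2 ^ p * (max a b) ^ p :=
        Real.mul_rpow (by norm_num) (le_max_of_le_left ha)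
    _ ≤ 2 ^ p * (a ^ p + b ^ p) := by
        have h2 : (0:ℝ) ≤ 2 ^ p := Real.rpow_nonneg (by norm_num) _
        nlinarith

lemma aux_integrable {d : ℕ} (p : ℝ) (hp : 1 ≤ p) (μ ν : Measure (Euc d))
    [IsFiniteMeasure μ] [IsFiniteMeasure ν]
    (hμm : Integrable (fun x => ‖x‖ ^ p) μ) (hνm : Integrable (fun x => ‖x‖ ^ p) ν) :
    Integrable (fun q : Euc d × Euc d => dist q.1 q.2 ^ p) (μ.prod ν) := by
  have hc : Continuous fun q : Euc d × Euc d => dist q.1 q.2 ^ p :=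
    (continuous_fst.dist continuous_snd).rpow_const (fun q => Or.inr (by linarith))
  have h1 : Integrable (fun q : Euc d × Euc d => ‖q.1‖ ^ p) (μ.prod ν) := by
    have := hμm.mul_prod (integrable_const (1:ℝ) (μ := ν))
    simpa using this
  have h2 : Integrable (fun q : Euc d × Euc d => ‖q.2‖ ^ p) (μ.prod ν) := by
    have := (integrable_const (1:ℝ) (μ := μ)).mul_prod hνm
    simpa using this
  refine ((h1.add h2).const_mul (2 ^ p)).mono hc.aestronglyMeasurable ?_
  filter_upwards with q
  rw [Real.norm_eq_abs, abs_of_nonneg (Real.rpow_nonneg dist_nonneg _)]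
  have hd : dist q.1 q.2 ≤ ‖q.1‖ + ‖q.2‖ := dist_le_norm_add_norm _ _
  calc dist q.1 q.2 ^ p ≤ (‖q.1‖ + ‖q.2‖) ^ p :=
        Real.rpow_le_rpow dist_nonneg hd (by linarith)
    _ ≤ 2 ^ p * (‖q.1‖ ^ p + ‖q.2‖ ^ p) :=
        aux_rpow_bound p _ _ hp (norm_nonneg _) (norm_nonneg _)
    _ ≤ ‖2 ^ p * (‖q.1‖ ^ p + ‖q.2‖ ^ p)‖ := le_abs_self _

lemma aux_prod_smul_right {α β : Type*} [MeasurableSpace α] [MeasurableSpace β]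
    (μ : Measure α) (ν : Measure β) [IsFiniteMeasure μ] [IsFiniteMeasure ν]
    (c : ENNReal) (hc : c ≠ ⊤) : μ.prod (c • ν) = c • μ.prod ν := by
  haveI : IsFiniteMeasure (c • ν) := by
    constructor
    rw [Measure.smul_apply, smul_eq_mul]
    exact ENNReal.mul_lt_top hc.lt_top (measure_lt_top ν _)
  refine Measure.prod_eq (μ := μ) (ν := c • ν) (μν := c • μ.prod ν) fun s t hs ht => ?_
  simp only [Measure.smul_apply, smul_eq_mul, Measure.prod_prod]
  ring

/-- if `μ, ν` have densities `f ≤ M g` (a.e., `M ≥ 1`) and finite `p`-th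
moments, then `W_p(μ,ν)^p ≤ ∫∫ |x−y|^p dμ dν − M⁻¹ ∫∫ |x−y|^p dμ dμ`. -/
theorem wassersteinPow_le_of_density_le {d : ℕ} (p M : ℝ) (hp : 1 ≤ p) (hM : 1 ≤ M)
    (μ ν : Measure (Euc d)) (f g : Euc d → ℝ)
    (hμ : IsProbabilityMeasure μ) (hν : IsProbabilityMeasure ν)
    (hf : Measurable f) (hg : Measurable g)
    (hf0 : ∀ x, 0 ≤ f x) (hg0 : ∀ x, 0 ≤ g x)
    (hμd : μ = volume.withDensity fun x => ENNReal.ofReal (f x))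
    (hνd : ν = volume.withDensity fun x => ENNReal.ofReal (g x))
    (hμm : Integrable (fun x => ‖x‖ ^ p) μ) (hνm : Integrable (fun x => ‖x‖ ^ p) ν)
    (hfg : ∀ᵐ x ∂(volume : Measure (Euc d)), f x ≤ M * g x) :
    WassersteinPow p μ ν ≤
      (∫ x, ∫ y, dist x y ^ p ∂ν ∂μ) - M⁻¹ * ∫ x, ∫ y, dist x y ^ p ∂μ ∂μ := by
  have hM0 : (0:ℝ) < M := lt_of_lt_of_le one_pos hM
  have hMi0 : (0:ℝ) ≤ M⁻¹ := by positivity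
  have hp0 : p ≠ 0 := ne_of_gt (lt_of_lt_of_le one_pos hp)
  set σ : Measure (Euc d) :=
    volume.withDensity (fun x => ENNReal.ofReal (g x - M⁻¹ * f x)) with hσdef
  -- decomposition ν = M⁻¹ • μ + σ
  have hsum : ν = ENNReal.ofReal M⁻¹ • μ + σ := by
    have hae : (fun x => ENNReal.ofReal M⁻¹ * ENNReal.ofReal (f x)
        + ENNReal.ofReal (g x - M⁻¹ * f x)) =ᵐ[(volume : Measure (Euc d))]
        fun x => ENNReal.ofReal (g x) := by
      filter_upwards [hfg] with x hx
      have h1 : M⁻¹ * f x ≤ g x := by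
        have := mul_le_mul_of_nonneg_left hx hMi0
        rwa [← mul_assoc, inv_mul_cancel₀ (ne_of_gt hM0), one_mul] at this
      rw [← ENNReal.ofReal_mul hMi0,
        ← ENNReal.ofReal_add (mul_nonneg hMi0 (hf0 x)) (by linarith)]
      ring_nf
    have h1 : ENNReal.ofReal M⁻¹ • (volume.withDensity fun x => ENNReal.ofReal (f x)) + σ
        = volume.withDensity (fun x => ENNReal.ofReal M⁻¹ * ENNReal.ofReal (f x)
            + ENNReal.ofReal (g x - M⁻¹ * f x)) := by
      have := withDensity_add_left
        (f := ENNReal.ofReal M⁻¹ • fun x : Euc d => ENNReal.ofReal (f x))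
        (μ := (volume : Measure (Euc d)))
        (by measurability) (fun x => ENNReal.ofReal (g x - M⁻¹ * f x))
      rw [withDensity_smul _ (by measurability : Measurable fun x : Euc d => ENNReal.ofReal (f x))] at this
      rw [hσdef, ← this]
      rfl
    rw [hνd, hμd, h1]
    exact (withDensity_congr_ae hae).symm
  haveI := hμ; haveI := hν
  -- σ is a finite measure
  have hσle : σ ≤ ν := by rw [hsum]; exact Measure.le_add_left le_rfl
  haveI : IsFiniteMeasure σ :=
    ⟨lt_of_le_of_lt (hσle Set.univ) (measure_lt_top ν _)⟩
  -- total mass relation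
  have hmass : (1 : ENNReal) = ENNReal.ofReal M⁻¹ + σ Set.univ := by
    have h := congrArg (fun m : Measure (Euc d) => m Set.univ) hsum
    simpa [Measure.smul_apply, smul_eq_mul, measure_univ] using h
  -- the coupling
  set T : Euc d → Euc d × Euc d := fun x => (x, x) with hTdef
  have hT : Measurable T := measurable_id.prodMk measurable_id
  set cpl : Measure (Euc d × Euc d) :=
    ENNReal.ofReal M⁻¹ • Measure.map T μ + μ.prod σ with hcpl
  have hc : Continuous fun q : Euc d × Euc d => dist q.1 q.2 ^ p :=
    (continuous_fst.dist continuous_snd).rpow_const (fun q => Or.inr (by linarith))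
  -- first marginal
  have hfst : cpl.map Prod.fst = μ := by
    rw [hcpl, Measure.map_add _ _ measurable_fst, Measure.map_smul,
      Measure.map_map measurable_fst hT, Measure.map_fst_prod]
    have : Prod.fst ∘ T = id := rfl
    rw [this, Measure.map_id, ← add_smul, ← hmass, one_smul]
  -- second marginal
  have hsnd : cpl.map Prod.snd = ν := by
    rw [hcpl, Measure.map_add _ _ measurable_snd, Measure.map_smul,
      Measure.map_map measurable_snd hT, Measure.map_snd_prod]
    have : Prod.snd ∘ T = id := rfl
    rw [this, Measure.map_id, measure_univ, one_smul]
    exact hsum.symm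
  -- probability measure
  have hprob : IsProbabilityMeasure cpl := by
    constructor
    have h : cpl Set.univ = (Measure.map Prod.fst cpl) Set.univ := by
      rw [Measure.map_apply measurable_fst MeasurableSet.univ]
      simp
    rw [h, hfst, measure_univ]
  -- integrability
  have hint_ν : Integrable (fun q : Euc d × Euc d => dist q.1 q.2 ^ p) (μ.prod ν) :=
    aux_integrable p hp μ ν hμm hνm
  have hint_μ : Integrable (fun q : Euc d × Euc d => dist q.1 q.2 ^ p) (μ.prod μ) :=
    aux_integrable p hp μ μ hμm hμm
  have hprod : μ.prod ν = ENNReal.ofReal M⁻¹ • μ.prod μ + μ.prod σ := by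
    conv_lhs => rw [hsum]
    rw [Measure.prod_add, aux_prod_smul_right μ μ _ ENNReal.ofReal_ne_top]
  have hint_σ : Integrable (fun q : Euc d × Euc d => dist q.1 q.2 ^ p) (μ.prod σ) := by
    rw [hprod] at hint_ν
    exact (integrable_add_measure.mp hint_ν).2
  have hint_ν' : Integrable (fun q : Euc d × Euc d => dist q.1 q.2 ^ p) (μ.prod ν) :=
    aux_integrable p hp μ ν hμm hνm
  have hdiag_int : Integrable (fun q : Euc d × Euc d => dist q.1 q.2 ^ p)
      (Measure.map T μ) := by
    rw [integrable_map_measure hc.aestronglyMeasurable hT.aemeasurable]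
    have : (fun x => dist (T x).1 (T x).2 ^ p) = fun _ : Euc d => (0:ℝ) := by
      funext x
      simp [hTdef, Real.zero_rpow hp0]
    rw [show ((fun q : Euc d × Euc d => dist q.1 q.2 ^ p) ∘ T)
        = fun _ : Euc d => (0:ℝ) from this]
    exact integrable_zero _ _ _
  -- cost of the coupling
  have hcost : ∫ q, dist q.1 q.2 ^ p ∂cpl =
      (∫ x, ∫ y, dist x y ^ p ∂ν ∂μ) - M⁻¹ * ∫ x, ∫ y, dist x y ^ p ∂μ ∂μ := by
    have hdiag0 : ∫ q, dist q.1 q.2 ^ p ∂(Measure.map T μ) = 0 := by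
      rw [integral_map hT.aemeasurable hc.aestronglyMeasurable]
      simp [hTdef, Real.zero_rpow hp0]
    have h2 : ∫ q, dist q.1 q.2 ^ p ∂(μ.prod ν)
        = M⁻¹ * ∫ q, dist q.1 q.2 ^ p ∂(μ.prod μ)
          + ∫ q, dist q.1 q.2 ^ p ∂(μ.prod σ) := by
      rw [hprod, integral_add_measure (hint_μ.smul_measure ENNReal.ofReal_ne_top) hint_σ,
        integral_smul_measure, ENNReal.toReal_ofReal hMi0]
      rfl
    have hiter_ν : ∫ q, dist q.1 q.2 ^ p ∂(μ.prod ν)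
        = ∫ x, ∫ y, dist x y ^ p ∂ν ∂μ := integral_prod _ hint_ν'
    have hiter_μ : ∫ q, dist q.1 q.2 ^ p ∂(μ.prod μ)
        = ∫ x, ∫ y, dist x y ^ p ∂μ ∂μ := integral_prod _ hint_μ
    rw [hcpl, integral_add_measure (hdiag_int.smul_measure ENNReal.ofReal_ne_top) hint_σ,
      integral_smul_measure, hdiag0]
    rw [hiter_ν, hiter_μ] at h2
    simp only [smul_zero, zero_add]
    linarith
  -- conclude
  have hmem : (∫ x, ∫ y, dist x y ^ p ∂ν ∂μ) - M⁻¹ * ∫ x, ∫ y, dist x y ^ p ∂μ ∂μ ∈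
      { r : ℝ | ∃ cpl : Measure (Euc d × Euc d), IsProbabilityMeasure cpl ∧
        cpl.map Prod.fst = μ ∧ cpl.map Prod.snd = ν ∧ r = ∫ q, dist q.1 q.2 ^ p ∂cpl } :=
    ⟨cpl, hprob, hfst, hsnd, hcost.symm⟩
  refine csInf_le ⟨0, fun r hr => ?_⟩ hmem
  obtain ⟨c', -, -, -, rfl⟩ := hr
  exact integral_nonneg fun q => Real.rpow_nonneg dist_nonneg _
end
end

section
/- As a → 0⁺, a^{−d}·∫_{ℝ^d} e^{−2(V(x)−V*)/a²} dx converges to Σ_{i=1}^{m*} ∫_{ℝ^d} e^{−x^⊤ ∇²V(x_i*) x} dx; equivalently, Z_a^{−1} ∼ a^d · Σ_{i=1}^{m*} ∫_{ℝ^d} e^{−x^⊤ ∇²V(x_i*) x} dx as a → 0⁺. -/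
/-!
Near a minimiser `xᵢ`, Taylor's formula with Lagrange remainder gives
`V (xᵢ + a • y) - V* = a² ∇²V(ξ)[y, y] / 2` for some `ξ` on the segment, so after the substitution
`x = xᵢ + a • y` the `a^{-d}`-rescaled integral over a small ball around `xᵢ` becomes an integral of
`exp (-∇²V(ξ)[y, y])`. Positive definiteness of the Hessian persists near `xᵢ`, which dominates the
integrand by a Gaussian `exp (-c ‖y‖²)`, and dominated convergence gives the limit
`∫ exp (-∇²V(xᵢ)[y, y])`. Away from the minimisers coercivity gives `V - V* ≥ η > 0`, so that part
of the integral is `O(exp (-2η / a²))`, negligible against `a^d`.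
-/

open MeasureTheory Filter

noncomputable section

/-- `L¹`-Wasserstein distance between two measures on `ℝ^d`: infimum of `∫ |x−y| dπ`
over all probability couplings `π`. -/
def W1 {d : ℕ} (μ ν : Measure (Euc d)) : ℝ :=
  sInf { r : ℝ | ∃ cpl : Measure (Euc d × Euc d), IsProbabilityMeasure cpl ∧
    cpl.map Prod.fst = μ ∧ cpl.map Prod.snd = ν ∧ r = ∫ p, dist p.1 p.2 ∂cpl }

/-- The Gibbs measure `ν_a` with density `Z_a e^{−2(V(x)−V*)/a²}`. -/
def gibbs {d : ℕ} (V : Euc d → ℝ) (Vstar a : ℝ) : Measure (Euc d) :=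
  (ENNReal.ofReal (∫ x : Euc d, Real.exp (-2 * (V x - Vstar) / a ^ 2)))⁻¹ •
    volume.withDensity (fun x => ENNReal.ofReal (Real.exp (-2 * (V x - Vstar) / a ^ 2)))

/-- `T_n = C_T n^{1+β}`. -/
def Tsched (C_T β : ℝ) (n : ℕ) : ℝ := C_T * (n : ℝ) ^ (1 + β)

/-- `a_n = A / √(log(T_n + e))`. -/
def aSeq (A C_T β : ℝ) (n : ℕ) : ℝ :=
  A / Real.sqrt (Real.log (Tsched C_T β n + Real.exp 1))

/-- Hessian quadratic form `v ↦ ∇²V(x)[v,v]`. -/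
def hessQuad {d : ℕ} (V : Euc d → ℝ) (x v : Euc d) : ℝ :=
  iteratedFDeriv ℝ 2 V x ![v, v]

/-- Determinant of the Hessian matrix `∇²V(x)`. -/
def hessDet {d : ℕ} (V : Euc d → ℝ) (x : Euc d) : ℝ :=
  (Matrix.of fun i j : Fin d =>
    iteratedFDeriv ℝ 2 V x ![EuclideanSpace.single i (1 : ℝ), EuclideanSpace.single j (1 : ℝ)]).det

/-- The limiting measure
`ν* = (Σ_j det(∇²V(x_j*))^{−1/2})^{−1} Σ_i det(∇²V(x_i*))^{−1/2} δ_{x_i*}`. -/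
def nuStar {d m : ℕ} (V : Euc d → ℝ) (xs : Fin m → Euc d) : Measure (Euc d) :=
  ∑ i : Fin m, (ENNReal.ofReal (hessDet V (xs i) ^ (-(1 : ℝ) / 2) /
      ∑ j : Fin m, hessDet V (xs j) ^ (-(1 : ℝ) / 2))) • Measure.dirac (xs i)

open Set Metric Topology Function Module

theorem eventually_nhdsGT_pairwise_disjoint_ball {ι X : Type*} [Finite ι] [MetricSpace X]
    {x : ι → X} (hx : Function.Injective x) :
    ∀ᶠ δ in 𝓝[>] (0 : ℝ), Pairwise (Disjoint on fun i => ball (x i) δ) := by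
  refine eventually_all.2 fun i => eventually_all.2 fun j => ?_
  refine eventually_imp_distrib_left.2 fun hij => ?_
  filter_upwards [Ioo_mem_nhdsGT (half_pos (dist_pos.2 (hx.ne hij)))] with δ hδ
  exact ball_disjoint_ball (by linarith [hδ.2])

theorem exists_pos_forall_add_le_of_isClosed {X : Type*} [TopologicalSpace X] {V : X → ℝ}
    (hV : Continuous V) (hco : Tendsto V (cocompact X) atTop) {F : Set X} (hF : IsClosed F)
    {m : ℝ} (hlt : ∀ x ∈ F, m < V x) : ∃ η > 0, ∀ x ∈ F, m + η ≤ V x := by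
  rcases F.eq_empty_or_nonempty with rfl | ⟨x₀, hx₀⟩
  · exact ⟨1, one_pos, by simp⟩
  obtain ⟨x₁, hx₁, hmin⟩ := hV.continuousOn.exists_isMinOn' hF hx₀
    ((hco.eventually (eventually_ge_atTop (V x₀))).filter_mono inf_le_left)
  exact ⟨V x₁ - m, sub_pos.2 (hlt x₁ hx₁), fun x hx => by linarith [show V x₁ ≤ V x from hmin hx]⟩

theorem integral_eq_sum_setIntegral_add_setIntegral_compl {α ι : Type*} [MeasurableSpace α]
    {μ : Measure α} [Fintype ι] {s : ι → Set α} (hs : ∀ i, MeasurableSet (s i))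
    (hdisj : Pairwise (Disjoint on s)) {f : α → ℝ} (hf : Integrable f μ) :
    ∫ x, f x ∂μ = ∑ i, ∫ x in s i, f x ∂μ + ∫ x in (⋃ i, s i)ᶜ, f x ∂μ := by
  rw [← integral_add_compl (MeasurableSet.iUnion hs) hf,
    integral_iUnion hs hdisj hf.integrableOn, tsum_fintype]

theorem tendsto_inv_pow_mul_exp_neg_div_sq (n : ℕ) {k : ℝ} (hk : 0 < k) :
    Tendsto (fun a : ℝ => (a ^ n)⁻¹ * Real.exp (-k / a ^ 2)) (𝓝[>] 0) (𝓝 0) := by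
  have h := (tendsto_rpow_mul_exp_neg_mul_atTop_nhds_zero (n / 2) k hk).comp
    ((tendsto_pow_atTop two_ne_zero).comp tendsto_inv_nhdsGT_zero)
  refine h.congr' (eventually_nhdsWithin_of_forall fun a (ha : 0 < a) => ?_)
  have hpow : (a⁻¹ ^ 2) ^ ((n : ℝ) / 2) = (a ^ n)⁻¹ := by
    rw [← Real.rpow_natCast_mul (by positivity), Nat.cast_ofNat,
      mul_div_cancel₀ _ two_ne_zero, Real.rpow_natCast, inv_pow]
  rw [Function.comp_apply, Function.comp_apply, hpow, inv_pow, ← div_eq_mul_inv]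

theorem MeasureTheory.Integrable.of_norm_sq_mul {E : Type*} [NormedAddCommGroup E] [ProperSpace E]
    [MeasurableSpace E] [BorelSpace E] {μ : Measure E} [IsFiniteMeasureOnCompacts μ]
    {g : E → ℝ} (hg : Continuous g) (h : Integrable (fun x => ‖x‖ ^ 2 * g x) μ) :
    Integrable g μ := by
  have hball : Integrable ((closedBall (0 : E) 1).indicator fun x => ‖g x‖) μ :=
    (hg.norm.continuousOn.integrableOn_compact (isCompact_closedBall 0 1)).integrable_indicator
      measurableSet_closedBall
  refine (hball.add h.norm).mono' hg.aestronglyMeasurable (Eventually.of_forall fun x => ?_)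
  by_cases hx : x ∈ closedBall (0 : E) 1
  · simp only [Pi.add_apply, indicator_of_mem hx, norm_mul, norm_pow, norm_norm]
    exact le_add_of_nonneg_right (by positivity)
  · have hx1 : 1 < ‖x‖ := by simpa using hx
    simp only [Pi.add_apply, indicator_of_notMem hx, zero_add, norm_mul, norm_pow, norm_norm]
    exact le_mul_of_one_le_left (norm_nonneg _) (one_le_pow₀ hx1.le)

theorem integral_comp_add_smul {E : Type*} [NormedAddCommGroup E] [NormedSpace ℝ E]
    [FiniteDimensional ℝ E] [MeasurableSpace E] [BorelSpace E] (μ : Measure E)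
    [μ.IsAddHaarMeasure] (f : E → ℝ) (x₀ : E) {a : ℝ} (ha : 0 < a) :
    ∫ y, f (x₀ + a • y) ∂μ = (a ^ finrank ℝ E)⁻¹ * ∫ x, f x ∂μ := by
  rw [Measure.integral_comp_smul μ (fun y => f (x₀ + y)) a, integral_add_left_eq_self,
    abs_of_pos (by positivity), smul_eq_mul]

theorem integrable_exp_neg_sub_div_sq {E : Type*} [NormedAddCommGroup E] [ProperSpace E]
    [MeasurableSpace E] [BorelSpace E] {μ : Measure E} [IsFiniteMeasureOnCompacts μ]
    {V : E → ℝ} (hV : Continuous V) {A Vstar a : ℝ} (hlow : ∀ x, Vstar ≤ V x)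
    (hint : Integrable (fun x => ‖x‖ ^ 2 * Real.exp (-2 * V x / A ^ 2)) μ) (ha : 0 < a)
    (haA : a ≤ A) : Integrable (fun x => Real.exp (-2 * (V x - Vstar) / a ^ 2)) μ := by
  have hA : Integrable (fun x => Real.exp (-2 * (V x - Vstar) / A ^ 2)) μ := by
    refine ((hint.of_norm_sq_mul (by fun_prop)).const_mul (Real.exp (2 * Vstar / A ^ 2))).congr
      (Eventually.of_forall fun x => ?_)
    simp only [← Real.exp_add]
    ring_nf
  refine hA.mono (by fun_prop) (Eventually.of_forall fun x => ?_)
  rw [Real.norm_of_nonneg (Real.exp_pos _).le, Real.norm_of_nonneg (Real.exp_pos _).le,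
    Real.exp_le_exp, div_le_div_iff₀ (pow_pos ha 2) (pow_pos (ha.trans_le haA) 2)]
  nlinarith [mul_le_mul_of_nonneg_left (pow_le_pow_left₀ ha.le haA 2) (sub_nonneg.2 (hlow x))]

theorem tendsto_inv_pow_mul_setIntegral_exp_neg_sub_div_sq {α : Type*} [MeasurableSpace α]
    {μ : Measure α} {S : Set α} (hS : MeasurableSet S) {V : α → ℝ} {A Vstar η : ℝ} (n : ℕ)
    (hA : 0 < A) (hη : 0 < η)
    (hint : Integrable (fun x => Real.exp (-2 * (V x - Vstar) / A ^ 2)) μ)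
    (hle : ∀ x ∈ S, Vstar + η ≤ V x) :
    Tendsto (fun a : ℝ => (a ^ n)⁻¹ * ∫ x in S, Real.exp (-2 * (V x - Vstar) / a ^ 2) ∂μ)
      (𝓝[>] 0) (𝓝 0) := by
  set C := ∫ x in S, Real.exp (-2 * (V x - Vstar) / A ^ 2) ∂μ
  have hbound : ∀ a ∈ Ioc 0 A, ∫ x in S, Real.exp (-2 * (V x - Vstar) / a ^ 2) ∂μ ≤
      Real.exp (2 * η / A ^ 2) * C * Real.exp (-(2 * η) / a ^ 2) := by
    intro a ha
    have hpq : (A ^ 2)⁻¹ ≤ (a ^ 2)⁻¹ :=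
      inv_anti₀ (pow_pos ha.1 2) (pow_le_pow_left₀ ha.1.le ha.2 2)
    calc ∫ x in S, Real.exp (-2 * (V x - Vstar) / a ^ 2) ∂μ
        ≤ ∫ x in S, Real.exp (2 * η / A ^ 2 + -(2 * η) / a ^ 2) *
            Real.exp (-2 * (V x - Vstar) / A ^ 2) ∂μ := by
          refine integral_mono_of_nonneg (Eventually.of_forall fun x => (Real.exp_pos _).le)
            (hint.integrableOn.const_mul _) ((ae_restrict_iff' hS).2 (Eventually.of_forall
              fun x hx => ?_))
          dsimp only
          rw [← Real.exp_add, Real.exp_le_exp]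
          simp only [div_eq_mul_inv]
          -- on `S`: `(V x - Vstar - η) * ((a ^ 2)⁻¹ - (A ^ 2)⁻¹) ≥ 0`
          nlinarith [mul_le_mul_of_nonneg_left hpq (by linarith [hle x hx] : 0 ≤ V x - Vstar - η)]
      _ = Real.exp (2 * η / A ^ 2) * C * Real.exp (-(2 * η) / a ^ 2) := by
          rw [integral_const_mul, Real.exp_add]; ring
  have hlim := (tendsto_inv_pow_mul_exp_neg_div_sq n (by positivity : 0 < 2 * η)).const_mul
    (Real.exp (2 * η / A ^ 2) * C)
  rw [mul_zero] at hlim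
  refine squeeze_zero' (eventually_nhdsWithin_of_forall fun a (ha : 0 < a) => ?_) ?_ hlim
  · exact mul_nonneg (by positivity) (setIntegral_nonneg hS fun x _ => (Real.exp_pos _).le)
  · filter_upwards [Ioc_mem_nhdsGT hA] with a ha
    calc (a ^ n)⁻¹ * ∫ x in S, Real.exp (-2 * (V x - Vstar) / a ^ 2) ∂μ
        ≤ (a ^ n)⁻¹ * (Real.exp (2 * η / A ^ 2) * C * Real.exp (-(2 * η) / a ^ 2)) :=
          mul_le_mul_of_nonneg_left (hbound a ha) (inv_nonneg.2 (pow_nonneg ha.1.le n))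
      _ = _ := by ring

section SecondOrder

variable {E : Type*} [NormedAddCommGroup E] [NormedSpace ℝ E]

theorem ContinuousMultilinearMap.apply_smul_pair (Φ : E [×2]→L[ℝ] ℝ) (s : ℝ) (v : E) :
    Φ ![s • v, s • v] = s ^ 2 * Φ ![v, v] := by
  have h : ![s • v, s • v] = fun i => s • ![v, v] i := by
    ext i; fin_cases i <;> rfl
  rw [h, Φ.map_smul_univ, Fin.prod_const, smul_eq_mul]

theorem ContinuousMultilinearMap.abs_apply_pair_sub_le
    (Φ Ψ : E [×2]→L[ℝ] ℝ) (v : E) :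
    |Φ ![v, v] - Ψ ![v, v]| ≤ ‖Φ - Ψ‖ * ‖v‖ ^ 2 := by
  simpa [Fin.prod_univ_two, sq] using (Φ - Ψ).le_opNorm ![v, v]

theorem ContinuousMultilinearMap.exists_pos_mul_sq_le_apply_pair [FiniteDimensional ℝ E]
    (Φ : E [×2]→L[ℝ] ℝ) (hΦ : ∀ v ≠ 0, 0 < Φ ![v, v]) :
    ∃ c > 0, ∀ v, c * ‖v‖ ^ 2 ≤ Φ ![v, v] := by
  have hzero : Φ ![0, 0] = 0 := by simpa using Φ.apply_smul_pair 0 0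
  rcases subsingleton_or_nontrivial E with hE | hE
  · exact ⟨1, one_pos, fun v => by simp [Subsingleton.elim v 0, hzero]⟩
  have hcont : Continuous fun u : E => Φ ![u, u] := by fun_prop
  obtain ⟨u, hu, hmin⟩ := (isCompact_sphere (0 : E) 1).exists_isMinOn
    (NormedSpace.sphere_nonempty.2 zero_le_one) hcont.continuousOn
  refine ⟨Φ ![u, u], hΦ u (ne_zero_of_mem_unit_sphere ⟨u, hu⟩), fun v => ?_⟩
  rcases eq_or_ne v 0 with rfl | hv
  · simp [hzero]
  have hv' : 0 < ‖v‖ := norm_pos_iff.2 hv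
  have hsphere : ‖v‖⁻¹ • v ∈ sphere (0 : E) 1 := by simp [norm_smul, hv'.ne']
  have hle : Φ ![u, u] ≤ Φ ![‖v‖⁻¹ • v, ‖v‖⁻¹ • v] := hmin hsphere
  rw [Φ.apply_smul_pair] at hle
  calc Φ ![u, u] * ‖v‖ ^ 2 ≤ ‖v‖⁻¹ ^ 2 * Φ ![v, v] * ‖v‖ ^ 2 := by gcongr
    _ = Φ ![v, v] := by field_simp

theorem exists_sub_eq_iteratedFDeriv_div_two_of_fderiv_eq_zero {f : E → ℝ} (hf : ContDiff ℝ 2 f)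
    {x : E} (hx : fderiv ℝ f x = 0) (v : E) :
    ∃ t ∈ Icc (0 : ℝ) 1, f (x + v) - f x = iteratedFDeriv ℝ 2 f (x + t • v) ![v, v] / 2 := by
  set φ : ℝ → ℝ := fun t => f (x + t • v) with hφ_def
  have hφ_comp : φ = (fun z => f (x + z)) ∘ ContinuousLinearMap.toSpanSingleton ℝ v := by
    ext t; simp [hφ_def]
  have hshift : ContDiff ℝ 2 (fun z => f (x + z)) := hf.comp (contDiff_const.add contDiff_id)
  have hφ : ContDiff ℝ 2 φ := by rw [hφ_comp]; exact hshift.comp (ContinuousLinearMap.contDiff _)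
  have hφ'' : ∀ t, iteratedDeriv 2 φ t = iteratedFDeriv ℝ 2 f (x + t • v) ![v, v] := by
    intro t
    rw [iteratedDeriv_eq_iteratedFDeriv, hφ_comp,
      ContinuousLinearMap.iteratedFDeriv_comp_right _ hshift _ le_rfl,
      ContinuousMultilinearMap.compContinuousLinearMap_apply, iteratedFDeriv_comp_add_left]
    congr 1
    ext i; fin_cases i <;> simp
  have hφ' : iteratedDerivWithin 1 φ (uIcc 0 1) 0 = 0 := by
    rw [iteratedDerivWithin_one, (hφ.differentiable (by norm_num) 0).derivWithin
      (uniqueDiffOn_uIcc zero_ne_one 0 (by simp))]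
    have hline : HasDerivAt (fun t : ℝ => x + t • v) v 0 := by
      simpa using ((hasDerivAt_id (0 : ℝ)).smul_const v).const_add x
    have hderiv :=
      (hf.differentiable (by norm_num) (x + (0 : ℝ) • v)).hasFDerivAt.comp_hasDerivAt 0 hline
    rw [zero_smul, add_zero, hx] at hderiv
    exact hderiv.deriv
  obtain ⟨t, ht, htaylor⟩ := taylor_mean_remainder_lagrange_iteratedDeriv (n := 1) zero_ne_one
    hφ.contDiffOn
  rw [uIoo_of_le zero_le_one] at ht
  refine ⟨t, Ioo_subset_Icc_self ht, ?_⟩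
  rw [show (1 : ℕ) = 0 + 1 from rfl, taylorWithinEval_succ, taylor_within_zero_eval, hφ', hφ'']
    at htaylor
  simpa [hφ_def] using htaylor

theorem ContDiff.exists_pos_eventually_mul_sq_le_iteratedFDeriv [FiniteDimensional ℝ E]
    {f : E → ℝ} (hf : ContDiff ℝ 2 f) {x : E}
    (hpos : ∀ v ≠ 0, 0 < iteratedFDeriv ℝ 2 f x ![v, v]) :
    ∃ c > 0, ∀ᶠ z in 𝓝 x, ∀ v, c * ‖v‖ ^ 2 ≤ iteratedFDeriv ℝ 2 f z ![v, v] := by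
  obtain ⟨c, hc, hcx⟩ := (iteratedFDeriv ℝ 2 f x).exists_pos_mul_sq_le_apply_pair hpos
  refine ⟨c / 2, half_pos hc, ?_⟩
  filter_upwards [Metric.tendsto_nhds.1 ((hf.continuous_iteratedFDeriv le_rfl).tendsto x) (c / 2)
    (half_pos hc)] with z hz v
  rw [dist_eq_norm] at hz
  have hdiff := (iteratedFDeriv ℝ 2 f z).abs_apply_pair_sub_le (iteratedFDeriv ℝ 2 f x) v
  nlinarith [abs_le.1 hdiff, hcx v, mul_le_mul_of_nonneg_right hz.le (sq_nonneg ‖v‖)]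

theorem half_mul_sq_le_sub_of_fderiv_eq_zero {f : E → ℝ} (hf : ContDiff ℝ 2 f) {x₀ v : E}
    (hx₀ : fderiv ℝ f x₀ = 0) {c δ : ℝ}
    (hpos : ∀ z ∈ ball x₀ δ, ∀ v, c * ‖v‖ ^ 2 ≤ iteratedFDeriv ℝ 2 f z ![v, v])
    (hv : ‖v‖ < δ) : c / 2 * ‖v‖ ^ 2 ≤ f (x₀ + v) - f x₀ := by
  obtain ⟨t, ht, htaylor⟩ := exists_sub_eq_iteratedFDeriv_div_two_of_fderiv_eq_zero hf hx₀ v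
  have hmem : x₀ + t • v ∈ ball x₀ δ := by
    rw [mem_ball, dist_self_add_left, norm_smul, Real.norm_of_nonneg ht.1]
    exact (mul_le_of_le_one_left (norm_nonneg v) ht.2).trans_lt hv
  linarith [hpos _ hmem v]

theorem tendsto_sub_div_sq_of_fderiv_eq_zero {f : E → ℝ} (hf : ContDiff ℝ 2 f) {x₀ : E}
    (hx₀ : fderiv ℝ f x₀ = 0) (y : E) :
    Tendsto (fun a : ℝ => (f (x₀ + a • y) - f x₀) / a ^ 2) (𝓝[≠] 0)
      (𝓝 (iteratedFDeriv ℝ 2 f x₀ ![y, y] / 2)) := by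
  choose τ hτ htaylor using
    fun a : ℝ => exists_sub_eq_iteratedFDeriv_div_two_of_fderiv_eq_zero hf hx₀ (a • y)
  have hτa : Tendsto (fun a => τ a * a) (𝓝[≠] 0) (𝓝 0) := by
    refine squeeze_zero_norm (fun a => ?_) (tendsto_norm_zero.mono_left nhdsWithin_le_nhds)
    rw [norm_mul, Real.norm_of_nonneg (hτ a).1]
    exact mul_le_of_le_one_left (norm_nonneg a) (hτ a).2
  have hpoint : Tendsto (fun a => x₀ + (τ a * a) • y) (𝓝[≠] 0) (𝓝 x₀) := by
    simpa using tendsto_const_nhds.add (hτa.smul_const y)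
  have hQ : Continuous fun z => iteratedFDeriv ℝ 2 f z ![y, y] := by
    have := hf.continuous_iteratedFDeriv (m := 2) le_rfl
    fun_prop
  refine ((hQ.tendsto x₀).comp hpoint).div_const 2 |>.congr' ?_
  filter_upwards [self_mem_nhdsWithin] with a (ha : a ≠ 0)
  simp only [Function.comp_apply, htaylor, ContinuousMultilinearMap.apply_smul_pair, smul_smul]
  field_simp

end SecondOrder

section Laplace

variable {E : Type*} [NormedAddCommGroup E] [InnerProductSpace ℝ E] [FiniteDimensional ℝ E]
  [MeasurableSpace E] [BorelSpace E]

theorem integrable_exp_neg_mul_sq_norm {c : ℝ} (hc : 0 < c) :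
    Integrable fun y : E => Real.exp (-(c * ‖y‖ ^ 2)) := by
  refine (GaussianFourier.integrable_cexp_neg_mul_sq_norm_add (V := E) (b := c)
    (by simpa using hc) 0 0).norm.congr (Eventually.of_forall fun y => ?_)
  simp [Complex.norm_exp, ← Complex.ofReal_pow]

theorem tendsto_inv_pow_finrank_mul_setIntegral_ball {f : E → ℝ} (hf : ContDiff ℝ 2 f) {x₀ : E}
    (hx₀ : fderiv ℝ f x₀ = 0) {c δ : ℝ} (hc : 0 < c) (hδ : 0 < δ)
    (hpos : ∀ z ∈ ball x₀ δ, ∀ v, c * ‖v‖ ^ 2 ≤ iteratedFDeriv ℝ 2 f z ![v, v]) :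
    Tendsto
      (fun a : ℝ => (a ^ finrank ℝ E)⁻¹ * ∫ x in ball x₀ δ, Real.exp (-2 * (f x - f x₀) / a ^ 2))
      (𝓝[>] 0) (𝓝 (∫ y, Real.exp (-iteratedFDeriv ℝ 2 f x₀ ![y, y]))) := by
  set g : ℝ → E → ℝ := fun a =>
    (ball x₀ δ).indicator fun x => Real.exp (-2 * (f x - f x₀) / a ^ 2)
  have hrescale : ∀ a > 0, ∫ y, g a (x₀ + a • y) =
      (a ^ finrank ℝ E)⁻¹ * ∫ x in ball x₀ δ, Real.exp (-2 * (f x - f x₀) / a ^ 2) := by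
    intro a ha
    rw [integral_comp_add_smul volume _ x₀ ha, integral_indicator measurableSet_ball]
  refine Tendsto.congr' (eventually_nhdsWithin_of_forall hrescale) ?_
  refine tendsto_integral_filter_of_dominated_convergence (fun y => Real.exp (-(c * ‖y‖ ^ 2)))
    ?_ ?_ (integrable_exp_neg_mul_sq_norm hc) ?_
  · refine Eventually.of_forall fun a => ?_
    have hcont : Continuous fun x => Real.exp (-2 * (f x - f x₀) / a ^ 2) := by
      have := hf.continuous; fun_prop
    exact ((hcont.measurable.indicator measurableSet_ball).comp (by fun_prop)).aestronglyMeasurable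
  · filter_upwards [self_mem_nhdsWithin] with a (ha : 0 < a)
    refine Eventually.of_forall fun y => ?_
    simp only [g]
    by_cases hy : x₀ + a • y ∈ ball x₀ δ
    · rw [indicator_of_mem hy, Real.norm_of_nonneg (Real.exp_pos _).le, Real.exp_le_exp]
      rw [mem_ball, dist_self_add_left] at hy
      have hlow := half_mul_sq_le_sub_of_fderiv_eq_zero hf hx₀ hpos hy
      rw [norm_smul, Real.norm_of_nonneg ha.le, mul_pow] at hlow
      rw [div_le_iff₀ (by positivity)]
      nlinarith
    · simp [indicator_of_notMem hy, (Real.exp_pos _).le]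
  · refine Eventually.of_forall fun y => ?_
    have hline : Tendsto (fun a : ℝ => x₀ + a • y) (𝓝 0) (𝓝 x₀) := by
      simpa using (tendsto_id (x := 𝓝 (0 : ℝ))).smul_const y |>.const_add x₀
    have hin : ∀ᶠ a in 𝓝[>] (0 : ℝ), x₀ + a • y ∈ ball x₀ δ :=
      (hline.eventually (isOpen_ball.mem_nhds (mem_ball_self hδ))).filter_mono nhdsWithin_le_nhds
    have hquot : Tendsto (fun a : ℝ => (f (x₀ + a • y) - f x₀) / a ^ 2) (𝓝[>] 0)
        (𝓝 (iteratedFDeriv ℝ 2 f x₀ ![y, y] / 2)) :=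
      (tendsto_sub_div_sq_of_fderiv_eq_zero hf hx₀ y).mono_left
        (nhdsWithin_mono 0 fun _ ha => ne_of_gt ha)
    have hexp : Tendsto (fun a => Real.exp (-2 * ((f (x₀ + a • y) - f x₀) / a ^ 2))) (𝓝[>] 0)
        (𝓝 (Real.exp (-iteratedFDeriv ℝ 2 f x₀ ![y, y]))) := by
      convert (hquot.const_mul (-2)).rexp using 3
      ring
    refine hexp.congr' (hin.mono fun a ha => ?_)
    simp only [g, indicator_of_mem ha, mul_div_assoc]

theorem eventually_tendsto_inv_pow_finrank_mul_setIntegral_ball {f : E → ℝ} (hf : ContDiff ℝ 2 f)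
    {x₀ : E} (hx₀ : fderiv ℝ f x₀ = 0) (hpos : ∀ v ≠ 0, 0 < iteratedFDeriv ℝ 2 f x₀ ![v, v]) :
    ∀ᶠ δ in 𝓝[>] 0, Tendsto
      (fun a : ℝ => (a ^ finrank ℝ E)⁻¹ * ∫ x in ball x₀ δ, Real.exp (-2 * (f x - f x₀) / a ^ 2))
      (𝓝[>] 0) (𝓝 (∫ y, Real.exp (-iteratedFDeriv ℝ 2 f x₀ ![y, y]))) := by
  obtain ⟨c, hc, hev⟩ := hf.exists_pos_eventually_mul_sq_le_iteratedFDeriv hpos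
  obtain ⟨ε, hε, hball⟩ := Metric.eventually_nhds_iff_ball.1 hev
  filter_upwards [Ioo_mem_nhdsGT hε] with δ hδ
  exact tendsto_inv_pow_finrank_mul_setIntegral_ball hf hx₀ hc hδ.1
    fun z hz => hball z (ball_subset_ball hδ.2.le hz)

end Laplace

theorem normalization_equivalent_general {d m : ℕ} (V : Euc d → ℝ) (A Vstar : ℝ) (xs : Fin m → Euc d)
    (hA : 0 < A)
    (hV : ContDiff ℝ 2 V)
    (hVco : Tendsto V (cocompact (Euc d)) atTop)
    (hinj : Function.Injective xs)
    (hlow : ∀ x, Vstar ≤ V x) (hxs : ∀ i, V (xs i) = Vstar)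
    (hargmin : ∀ x, V x = Vstar → ∃ i, x = xs i)
    (hhess : ∀ i, ∀ v : Euc d, v ≠ 0 → 0 < hessQuad V (xs i) v)
    (hint : Integrable (fun x : Euc d => ‖x‖ ^ 2 * Real.exp (-2 * V x / A ^ 2)))
    :
    Tendsto (fun a : ℝ => (a ^ d)⁻¹ * ∫ x : Euc d, Real.exp (-2 * (V x - Vstar) / a ^ 2))
      (nhdsWithin 0 (Set.Ioi 0))
      (nhds (∑ i : Fin m, ∫ x : Euc d, Real.exp (-(hessQuad V (xs i) x)))) := by
  have hgrad : ∀ i, fderiv ℝ V (xs i) = 0 := fun i =>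
    IsLocalMin.fderiv_eq_zero (Eventually.of_forall fun x => (hxs i).trans_le (hlow x))
  obtain ⟨δ, hδ, hlim, hdisj⟩ := (eventually_mem_nhdsWithin.and ((eventually_all.2 fun i =>
    eventually_tendsto_inv_pow_finrank_mul_setIntegral_ball hV (hgrad i) (hhess i)).and
    (eventually_nhdsGT_pairwise_disjoint_ball hinj))).exists
  obtain ⟨η, hη, hηS⟩ := exists_pos_forall_add_le_of_isClosed hV.continuous hVco
    (isOpen_iUnion fun i => isOpen_ball).isClosed_compl fun x hx => (hlow x).lt_of_ne fun h => by
      obtain ⟨i, rfl⟩ := hargmin x h.symm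
      exact hx (mem_iUnion.2 ⟨i, mem_ball_self hδ⟩)
  have htail := tendsto_inv_pow_mul_setIntegral_exp_neg_sub_div_sq
    (MeasurableSet.iUnion fun i => measurableSet_ball).compl d hA hη
    (integrable_exp_neg_sub_div_sq hV.continuous hlow hint hA le_rfl) hηS
  have hsum := tendsto_finsetSum Finset.univ fun i _ => hlim i
  simp only [hxs, finrank_euclideanSpace_fin] at hsum
  rw [← add_zero (∑ i, _)]
  refine (hsum.add htail).congr' ?_
  filter_upwards [Ioc_mem_nhdsGT hA] with a ha
  rw [integral_eq_sum_setIntegral_add_setIntegral_compl (fun i => measurableSet_ball) hdisj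
    (integrable_exp_neg_sub_div_sq hV.continuous hlow hint ha.1 ha.2), mul_add, Finset.mul_sum]

/-- as `a → 0⁺`,
`a^{−d} ∫ e^{−2(V(x)−V*)/a²} dx → Σ_i ∫ e^{−xᵀ∇²V(x_i*)x} dx`. -/
theorem normalization_equivalent {d m : ℕ} (V : Euc d → ℝ) (A C_T β Vstar : ℝ) (xs : Fin m → Euc d)
    (hd : 1 ≤ d) (hA : 0 < A) (hCT : 0 < C_T) (hβ : 0 < β)
    (hV : ContDiff ℝ 2 V) (hVpos : ∀ x, 0 < V x)
    (hVco : Tendsto V (cocompact (Euc d)) atTop)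
    (hm : 1 ≤ m) (hinj : Function.Injective xs)
    (hVstar : 0 < Vstar)
    (hlow : ∀ x, Vstar ≤ V x) (hxs : ∀ i, V (xs i) = Vstar)
    (hargmin : ∀ x, V x = Vstar → ∃ i, x = xs i)
    (hhess : ∀ i, ∀ v : Euc d, v ≠ 0 → 0 < hessQuad V (xs i) v)
    (hint : Integrable (fun x : Euc d => ‖x‖ ^ 2 * Real.exp (-2 * V x / A ^ 2)))
    :
    Tendsto (fun a : ℝ => (a ^ d)⁻¹ * ∫ x : Euc d, Real.exp (-2 * (V x - Vstar) / a ^ 2))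
      (nhdsWithin 0 (Set.Ioi 0))
      (nhds (∑ i : Fin m, ∫ x : Euc d, Real.exp (-(hessQuad V (xs i) x)))) :=
  normalization_equivalent_general V A Vstar xs hA hV hVco hinj hlow hxs hargmin hhess hint
end
end

section
/- The map a ↦ Z_a^{−1} = ∫_{ℝ^d} e^{−2(V(x)−V*)/a²} dx is non-decreasing on (0,A], and there exists a constant C > 0 such that for all n ≥ 1, 0 ≤ Z_{a_n}^{−1} − Z_{a_{n+1}}^{−1} ≤ C·a_{n+1}^{d−1}·(a_n − a_{n+1}). -/
open MeasureTheory Filter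

noncomputable section

/-!
Write `w = V - V*`. For each `x`, `a ↦ exp (-2 w(x) / a²)` is non-decreasing, which gives the
monotonicity. For `s ≤ b`, the bound `e^{-x} - e^{-y} ≤ (y - x) e^{-x}` together with
`w e^{-2w/b²} ≤ b² e^{-w/b²}` gives `Z_b⁻¹ - Z_s⁻¹ ≤ 4 (b - s) b / s² · ∫ e^{-w/b²}`, and a
Laplace-type estimate bounds the last integral by `C b^d`: near each minimiser the nondegenerate
Hessian makes `w` grow quadratically, so the integrand is dominated by a Gaussian of width `b`,
while away from the minimisers coercivity keeps `w ≥ δ > 0` and `e^{-δ/b²} = O(b^d)`. Along the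
schedule `a_n ≤ κ a_{n+1}` for a fixed `κ`, so the bound `C a_{n+1}^{d-1} (a_n - a_{n+1})` holds
once `a_n ≤ A/2`; the finitely many earlier terms only enlarge `C`.
-/

open Real Set Topology Module
open scoped Nat

lemma exp_neg_sub_exp_neg_le (x y : ℝ) : exp (-x) - exp (-y) ≤ (y - x) * exp (-x) := by
  have hsplit : exp (-y) = exp (-x) * exp (-(y - x)) := by rw [← exp_add]; ring_nf
  nlinarith [one_sub_le_exp_neg (y - x), exp_pos (-x)]

lemma mul_exp_neg_two_mul_div_sq_le (w : ℝ) {b : ℝ} (hb : b ≠ 0) :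
    w * exp (-2 * w / b ^ 2) ≤ b ^ 2 * exp (-w / b ^ 2) := by
  have hsplit : w * exp (-2 * w / b ^ 2)
      = b ^ 2 * ((w / b ^ 2) * exp (-(w / b ^ 2))) * exp (-w / b ^ 2) := by
    rw [show -2 * w / b ^ 2 = -(w / b ^ 2) + -w / b ^ 2 by ring, exp_add]
    field_simp
  have hy : (w / b ^ 2) * exp (-(w / b ^ 2)) ≤ 1 :=
    (mul_exp_neg_le_exp_neg_one _).trans (exp_le_one_iff.2 (by norm_num))
  rw [hsplit]
  have := mul_le_mul_of_nonneg_left hy (sq_nonneg b)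
  nlinarith [exp_pos (-w / b ^ 2)]

lemma exp_neg_div_sq_le_mul_pow {δ a R : ℝ} (hδ : 0 < δ) (ha : 0 < a) (haR : a ≤ R) (d : ℕ) :
    exp (-δ / a ^ 2) ≤ d ! * (R / δ) ^ d * a ^ d := by
  have hx : 0 < δ / a ^ 2 := by positivity
  have htaylor := pow_div_factorial_le_exp (δ / a ^ 2) hx.le d
  calc exp (-δ / a ^ 2) = (exp (δ / a ^ 2))⁻¹ := by rw [neg_div, exp_neg]
    _ ≤ ((δ / a ^ 2) ^ d / d !)⁻¹ := inv_anti₀ (by positivity) htaylor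
    _ = d ! * (a / δ * a) ^ d := by
        rw [inv_div, div_eq_mul_inv, ← inv_pow, inv_div]
        congr 2
        field_simp
    _ = d ! * (a / δ) ^ d * a ^ d := by rw [mul_pow, mul_assoc]
    _ ≤ d ! * (R / δ) ^ d * a ^ d := by gcongr

lemma exp_neg_div_sq_le_mul_pow_mul_exp {u δ a A : ℝ} (hδ : 0 < δ) (hδu : δ ≤ u) (ha : 0 < a)
    (haA : a ≤ A / 2) (d : ℕ) :
    exp (-u / a ^ 2) ≤ d ! * (A / δ) ^ d * a ^ d * exp (-2 * u / A ^ 2) := by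
  have hexp : -u / a ^ 2 ≤ -(δ / 2) / a ^ 2 + -2 * u / A ^ 2 := by
    have h₁ : 2 * u / A ^ 2 ≤ u / 2 / a ^ 2 := by
      rw [div_le_div_iff₀ (by nlinarith) (by positivity)]
      nlinarith [mul_le_mul_of_nonneg_left (show (2 * a) ^ 2 ≤ A ^ 2 by nlinarith)
        (show 0 ≤ u by linarith), sq_nonneg a]
    have h₂ : δ / 2 / a ^ 2 ≤ u / 2 / a ^ 2 := by gcongr
    have h₃ : u / a ^ 2 = u / 2 / a ^ 2 + u / 2 / a ^ 2 := by ring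
    simp only [neg_mul, neg_div]
    linarith
  have hfar : exp (-(δ / 2) / a ^ 2) ≤ d ! * (A / δ) ^ d * a ^ d := by
    simpa [div_div_div_cancel_right₀ (two_ne_zero (α := ℝ))] using
      exp_neg_div_sq_le_mul_pow (half_pos hδ) ha haA d
  calc exp (-u / a ^ 2) ≤ exp (-(δ / 2) / a ^ 2) * exp (-2 * u / A ^ 2) := by
        rw [← exp_add]; exact exp_le_exp.2 hexp
    _ ≤ _ := mul_le_mul_of_nonneg_right hfar (exp_pos _).le

lemma neg_div_sq_le_neg_div_sq {u a b : ℝ} (hu : 0 ≤ u) (ha : 0 < a) (hab : a ≤ b) :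
    -u / a ^ 2 ≤ -u / b ^ 2 := by
  rw [neg_div, neg_div, neg_le_neg_iff]
  exact div_le_div_of_nonneg_left hu (by positivity) (pow_le_pow_left₀ ha.le hab 2)

lemma exp_neg_two_mul_div_sq_sub_le {w s b : ℝ} (hw : 0 ≤ w) (hs : 0 < s) (hsb : s ≤ b) :
    exp (-2 * w / b ^ 2) - exp (-2 * w / s ^ 2) ≤ 4 * (b - s) * b / s ^ 2 * exp (-w / b ^ 2) := by
  have hb : 0 < b := hs.trans_le hsb
  have hcoeff : 2 * w / s ^ 2 - 2 * w / b ^ 2 ≤ 4 * (b - s) / (b * s ^ 2) * w := by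
    have : 4 * (b - s) / (b * s ^ 2) * w - (2 * w / s ^ 2 - 2 * w / b ^ 2)
        = 2 * w * (b - s) ^ 2 / (b ^ 2 * s ^ 2) := by field_simp; ring
    have : 0 ≤ 2 * w * (b - s) ^ 2 / (b ^ 2 * s ^ 2) := by positivity
    linarith
  calc exp (-2 * w / b ^ 2) - exp (-2 * w / s ^ 2)
      ≤ (2 * w / s ^ 2 - 2 * w / b ^ 2) * exp (-2 * w / b ^ 2) := by
        simpa only [neg_mul, neg_div] using exp_neg_sub_exp_neg_le (2 * w / b ^ 2) (2 * w / s ^ 2)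
    _ ≤ 4 * (b - s) / (b * s ^ 2) * (w * exp (-2 * w / b ^ 2)) := by
        rw [← mul_assoc]; gcongr
    _ ≤ 4 * (b - s) / (b * s ^ 2) * (b ^ 2 * exp (-w / b ^ 2)) := by
        have : 0 ≤ b - s := sub_nonneg.2 hsb
        exact mul_le_mul_of_nonneg_left (mul_exp_neg_two_mul_div_sq_le w hb.ne') (by positivity)
    _ = 4 * (b - s) * b / s ^ 2 * exp (-w / b ^ 2) := by field_simp

section QuadraticGrowth

variable {E : Type*} [NormedAddCommGroup E] [NormedSpace ℝ E]

lemma exists_pos_mul_sq_norm_le_of_pos [FiniteDimensional ℝ E]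
    (Q : ContinuousMultilinearMap ℝ (fun _ : Fin 2 => E) ℝ) (hQ : ∀ v ≠ 0, 0 < Q ![v, v]) :
    ∃ μ > 0, ∀ v, μ * ‖v‖ ^ 2 ≤ Q ![v, v] := by
  rcases subsingleton_or_nontrivial E with hE | hE
  · refine ⟨1, one_pos, fun v => ?_⟩
    rw [Subsingleton.elim v 0, Q.map_coord_zero 0 rfl]
    simp
  have hcont : Continuous fun v : E => Q ![v, v] :=
    Q.cont.comp (continuous_pi fun i => by fin_cases i <;> exact continuous_id)
  obtain ⟨u₀, hu₀, hmin⟩ := (isCompact_sphere (0 : E) 1).exists_isMinOn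
    (NormedSpace.sphere_nonempty.2 zero_le_one) hcont.continuousOn
  have hu₀0 : u₀ ≠ 0 := ne_zero_of_mem_unit_sphere ⟨u₀, hu₀⟩
  refine ⟨Q ![u₀, u₀], hQ u₀ hu₀0, fun v => ?_⟩
  rcases eq_or_ne v 0 with rfl | hv
  · simp [Q.map_coord_zero (m := ![(0 : E), 0]) 0 rfl]
  have hnorm : 0 < ‖v‖ := norm_pos_iff.2 hv
  have hu : ‖v‖⁻¹ • v ∈ Metric.sphere (0 : E) 1 := by
    simp [norm_smul, hnorm.ne']
  have hhom : Q ![v, v] = ‖v‖ ^ 2 * Q ![‖v‖⁻¹ • v, ‖v‖⁻¹ • v] := by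
    have := Q.map_smul_univ (fun _ => ‖v‖⁻¹) ![v, v]
    simp only [Fin.prod_univ_two, smul_eq_mul] at this
    rw [show (fun i => ‖v‖⁻¹ • ![v, v] i) = ![‖v‖⁻¹ • v, ‖v‖⁻¹ • v] by
      ext i; fin_cases i <;> rfl] at this
    rw [this]
    field_simp
  rw [hhom, mul_comm]
  exact mul_le_mul_of_nonneg_left (hmin hu) (by positivity)

lemma half_mul_sq_norm_le_of_norm_sub_le {Q Q₀ : ContinuousMultilinearMap ℝ (fun _ : Fin 2 => E) ℝ}
    {μ : ℝ} (hQ₀ : ∀ v, μ * ‖v‖ ^ 2 ≤ Q₀ ![v, v]) (hQ : ‖Q - Q₀‖ ≤ μ / 2) (v : E) :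
    μ / 2 * ‖v‖ ^ 2 ≤ Q ![v, v] := by
  have hdiff : |(Q - Q₀) ![v, v]| ≤ μ / 2 * ‖v‖ ^ 2 := by
    have := (Q - Q₀).le_opNorm ![v, v]
    rw [Fin.prod_univ_two] at this
    simp only [Matrix.cons_val_zero, Matrix.cons_val_one, Real.norm_eq_abs] at this
    nlinarith [norm_nonneg (Q - Q₀), sq_nonneg ‖v‖]
  have hsplit : Q ![v, v] = Q₀ ![v, v] + (Q - Q₀) ![v, v] := by rw [sub_apply]; ring
  linarith [hQ₀ v, neg_abs_le ((Q - Q₀) ![v, v])]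

lemma add_half_le_of_le_deriv2 {g g' g'' : ℝ → ℝ} {m : ℝ} (hg : ∀ t, HasDerivAt g (g' t) t)
    (hg' : ∀ t, HasDerivAt g' (g'' t) t) (hg'0 : g' 0 = 0) (hm : ∀ t ∈ Icc (0 : ℝ) 1, m ≤ g'' t) :
    g 0 + m / 2 ≤ g 1 := by
  have h01 : (0 : ℝ) ∈ Icc (0 : ℝ) 1 := ⟨le_rfl, zero_le_one⟩
  have h11 : (1 : ℝ) ∈ Icc (0 : ℝ) 1 := ⟨zero_le_one, le_rfl⟩
  have hslope : ∀ t ∈ Icc (0 : ℝ) 1, m * t ≤ g' t := by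
    intro t ht
    have := (convex_Icc (0 : ℝ) 1).mul_sub_le_image_sub_of_le_deriv
      (fun x _ => (hg' x).continuousAt.continuousWithinAt)
      (fun x _ => (hg' x).differentiableAt.differentiableWithinAt)
      (fun x hx => (hg' x).deriv ▸ hm x (interior_subset hx)) 0 h01 t ht ht.1
    simpa [hg'0] using this
  have hψ : ∀ t, HasDerivAt (fun t => g t - m / 2 * t ^ 2) (g' t - m * t) t := fun t =>
    ((hg t).sub ((hasDerivAt_pow 2 t).const_mul (m / 2))).congr_deriv (by ring)
  have := (convex_Icc (0 : ℝ) 1).mul_sub_le_image_sub_of_le_deriv (C := 0)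
    (fun x _ => (hψ x).continuousAt.continuousWithinAt)
    (fun x _ => (hψ x).differentiableAt.differentiableWithinAt)
    (fun x hx => (hψ x).deriv ▸ sub_nonneg.2 (hslope x (interior_subset hx))) 0 h01 1 h11
    zero_le_one
  norm_num at this
  linarith

lemma exists_mul_sq_norm_le_sub_of_isLocalMin [FiniteDimensional ℝ E] {V : E → ℝ} {p : E}
    (hV : ContDiff ℝ 2 V) (hmin : IsLocalMin V p)
    (hpos : ∀ v ≠ 0, 0 < iteratedFDeriv ℝ 2 V p ![v, v]) :
    ∃ r > 0, ∃ c > 0, ∀ x, dist x p < r → c * ‖x - p‖ ^ 2 ≤ V x - V p := by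
  obtain ⟨μ, hμ, hQ₀⟩ := exists_pos_mul_sq_norm_le_of_pos _ hpos
  obtain ⟨r, hr, hclose⟩ := Metric.continuousAt_iff.1
    (hV.continuous_iteratedFDeriv le_rfl).continuousAt (μ / 2) (half_pos hμ)
  refine ⟨r, hr, μ / 4, by positivity, fun x hx => ?_⟩
  set h := x - p
  have hdV : Differentiable ℝ V := hV.differentiable two_ne_zero
  have hdV' : Differentiable ℝ (fderiv ℝ V) :=
    (hV.fderiv_right one_add_one_eq_two.le).differentiable one_ne_zero
  have hline : ∀ t : ℝ, HasDerivAt (fun t : ℝ => p + t • h) h t := fun t => by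
    simpa using ((hasDerivAt_id t).smul_const h).const_add p
  have hg : ∀ t : ℝ, HasDerivAt (fun t => V (p + t • h)) (fderiv ℝ V (p + t • h) h) t :=
    fun t => (hdV _).hasFDerivAt.comp_hasDerivAt t (hline t)
  have hg' : ∀ t : ℝ, HasDerivAt (fun t => fderiv ℝ V (p + t • h) h)
      (iteratedFDeriv ℝ 2 V (p + t • h) ![h, h]) t := fun t => by
    rw [iteratedFDeriv_two_apply]
    simpa using
      ((hdV' _).hasFDerivAt.comp_hasDerivAt t (hline t)).clm_apply (hasDerivAt_const t h)
  have hball : ∀ t ∈ Icc (0 : ℝ) 1, dist (p + t • h) p < r := fun t ht => by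
    rw [dist_eq_norm, add_sub_cancel_left, norm_smul, Real.norm_of_nonneg ht.1, ← dist_eq_norm]
    nlinarith [dist_nonneg (x := x) (y := p), ht.2]
  have := add_half_le_of_le_deriv2 hg hg' (by simp [hmin.fderiv_eq_zero]) fun t ht =>
    half_mul_sq_norm_le_of_norm_sub_le hQ₀
      (by simpa [dist_eq_norm] using (hclose (hball t ht)).le) h
  simp only [zero_smul, add_zero, one_smul, h, add_sub_cancel] at this
  linarith

end QuadraticGrowth

lemma exists_pos_add_le_of_tendsto_cocompact {X : Type*} [TopologicalSpace X] {V : X → ℝ}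
    (hV : Continuous V) (hVco : Tendsto V (cocompact X) atTop) {F : Set X} (hF : IsClosed F)
    {m : ℝ} (hm : ∀ x ∈ F, m < V x) : ∃ δ > 0, ∀ x ∈ F, m + δ ≤ V x := by
  obtain ⟨K, hK, hKc⟩ := mem_cocompact.1 (hVco.eventually_ge_atTop (m + 1))
  obtain ⟨a, ha, haK⟩ := (hK.inter_left hF).exists_forall_le' hV.continuousOn
    fun x hx => hm x hx.1
  refine ⟨min 1 (a - m), lt_min one_pos (sub_pos.2 ha), fun x hx => ?_⟩
  by_cases hxK : x ∈ K
  · linarith [haK x ⟨hx, hxK⟩, min_le_right 1 (a - m)]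
  · linarith [show m + 1 ≤ V x from hKc hxK, min_le_left 1 (a - m)]

lemma integrable_exp_of_le {α : Type*} [MeasurableSpace α] {μ : Measure α} {f g : α → ℝ}
    (hg : Integrable (fun x => exp (g x)) μ) (hf : AEMeasurable f μ) (hfg : ∀ x, f x ≤ g x) :
    Integrable (fun x => exp (f x)) μ :=
  hg.mono' (measurable_exp.comp_aemeasurable hf).aestronglyMeasurable <|
    Eventually.of_forall fun x => by
      rw [norm_of_nonneg (exp_pos _).le]
      exact exp_le_exp.2 (hfg x)

lemma integrable_of_integrable_sq_norm_mul {E : Type*} [NormedAddCommGroup E] [ProperSpace E]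
    [MeasurableSpace E] [BorelSpace E] {μ : Measure E} [IsFiniteMeasureOnCompacts μ] {f : E → ℝ}
    (hf : AEStronglyMeasurable f μ) (hf0 : ∀ x, 0 ≤ f x) (hf1 : ∀ x, f x ≤ 1)
    (h : Integrable (fun x => ‖x‖ ^ 2 * f x) μ) : Integrable f μ := by
  have hball : Integrable ((Metric.closedBall (0 : E) 1).indicator fun _ => (1 : ℝ)) μ :=
    (integrableOn_const (isCompact_closedBall 0 1).measure_lt_top.ne).integrable_indicator
      measurableSet_closedBall
  refine (hball.add h).mono' hf (Eventually.of_forall fun x => ?_)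
  rw [norm_of_nonneg (hf0 x)]
  by_cases hx : ‖x‖ ≤ 1
  · have : x ∈ Metric.closedBall (0 : E) 1 := mem_closedBall_zero_iff.2 hx
    simp only [Pi.add_apply, indicator_of_mem this]
    nlinarith [hf1 x, hf0 x, sq_nonneg ‖x‖]
  · have : x ∉ Metric.closedBall (0 : E) 1 := by simpa using hx
    simp only [Pi.add_apply, indicator_of_notMem this, zero_add]
    have : 1 ≤ ‖x‖ ^ 2 := one_le_pow₀ (not_le.1 hx).le
    nlinarith [hf0 x]

lemma integrable_exp_neg_two_mul_sub_div_sq {E : Type*} [NormedAddCommGroup E] [ProperSpace E]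
    [MeasurableSpace E] [BorelSpace E] {μ : Measure E} [IsFiniteMeasureOnCompacts μ]
    {V : E → ℝ} {Vstar A : ℝ} (hV : Measurable V) (hlow : ∀ x, Vstar ≤ V x)
    (hint : Integrable (fun x => ‖x‖ ^ 2 * exp (-2 * V x / A ^ 2)) μ) :
    Integrable (fun x => exp (-2 * (V x - Vstar) / A ^ 2)) μ := by
  refine integrable_of_integrable_sq_norm_mul (by fun_prop) (fun x => (exp_pos _).le)
    (fun x => exp_le_one_iff.2 ?_) ?_
  · exact div_nonpos_of_nonpos_of_nonneg (by nlinarith [hlow x]) (sq_nonneg A)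
  · refine (hint.const_mul (exp (2 * Vstar / A ^ 2))).congr (Eventually.of_forall fun x => ?_)
    simp only
    rw [show -2 * (V x - Vstar) / A ^ 2 = 2 * Vstar / A ^ 2 + -2 * V x / A ^ 2 by ring, exp_add]
    ring

lemma exp_neg_div_sq_le_sum_add {E : Type*} [SeminormedAddCommGroup E] {ι : Type*} [Fintype ι]
    {w : E → ℝ} {xs : ι → E} {r c : ι → ℝ} {δ A a : ℝ} (hδ : 0 < δ)
    (hquad : ∀ i x, dist x (xs i) < r i → c i * ‖x - xs i‖ ^ 2 ≤ w x)
    (hgap : ∀ x, (∀ i, r i ≤ dist x (xs i)) → δ ≤ w x) (ha : 0 < a) (haA : a ≤ A / 2) (d : ℕ)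
    (x : E) : exp (-w x / a ^ 2) ≤
      ∑ i, exp (-(c i / a ^ 2) * ‖x - xs i‖ ^ 2) +
        d ! * (A / δ) ^ d * a ^ d * exp (-2 * w x / A ^ 2) := by
  have hsum : 0 ≤ ∑ i, exp (-(c i / a ^ 2) * ‖x - xs i‖ ^ 2) :=
    Finset.sum_nonneg fun i _ => (exp_pos _).le
  by_cases hx : ∃ i, dist x (xs i) < r i
  · obtain ⟨i, hi⟩ := hx
    have hnear : exp (-w x / a ^ 2) ≤ exp (-(c i / a ^ 2) * ‖x - xs i‖ ^ 2) := by
      rw [exp_le_exp, neg_mul, neg_div, neg_le_neg_iff, div_mul_eq_mul_div]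
      exact div_le_div_of_nonneg_right (hquad i x hi) (sq_nonneg a)
    have htail : 0 ≤ d ! * (A / δ) ^ d * a ^ d * exp (-2 * w x / A ^ 2) := by
      have : 0 < A := by linarith
      positivity
    linarith [Finset.single_le_sum (fun j _ => (exp_pos _).le) (Finset.mem_univ i)
      (f := fun j => exp (-(c j / a ^ 2) * ‖x - xs j‖ ^ 2))]
  · push Not at hx
    linarith [exp_neg_div_sq_le_mul_pow_mul_exp hδ (hgap x hx) ha haA d]

section Laplace

variable {E : Type*} [NormedAddCommGroup E] [InnerProductSpace ℝ E] [FiniteDimensional ℝ E]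
  [MeasurableSpace E] [BorelSpace E]

lemma integrable_exp_neg_mul_sq_norm_sub {b : ℝ} (hb : 0 < b) (p : E) :
    Integrable fun x : E => exp (-b * ‖x - p‖ ^ 2) :=
  (Integrable.of_integral_ne_zero (by
    rw [GaussianFourier.integral_rexp_neg_mul_sq_norm hb]; positivity)).comp_sub_right p

lemma integral_exp_neg_div_sq_mul_sq_norm_sub {c a : ℝ} (hc : 0 < c) (ha : 0 < a) (p : E) :
    ∫ x : E, exp (-(c / a ^ 2) * ‖x - p‖ ^ 2) =
      (π / c) ^ (finrank ℝ E / 2 : ℝ) * a ^ finrank ℝ E := by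
  rw [integral_sub_right_eq_self (fun x : E => exp (-(c / a ^ 2) * ‖x‖ ^ 2)) p,
    GaussianFourier.integral_rexp_neg_mul_sq_norm (by positivity),
    show π / (c / a ^ 2) = π / c * a ^ 2 by field_simp, mul_rpow (by positivity) (by positivity),
    ← rpow_natCast a 2, ← rpow_mul ha.le, ← rpow_natCast a (finrank ℝ E)]
  congr 2
  push_cast
  ring

lemma integral_exp_neg_div_sq_le_mul_pow {ι : Type*} [Fintype ι] {w : E → ℝ} {xs : ι → E}
    {r c : ι → ℝ} {δ A : ℝ} (hc : ∀ i, 0 < c i) (hδ : 0 < δ)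
    (hquad : ∀ i x, dist x (xs i) < r i → c i * ‖x - xs i‖ ^ 2 ≤ w x)
    (hgap : ∀ x, (∀ i, r i ≤ dist x (xs i)) → δ ≤ w x)
    (hA : Integrable fun x => exp (-2 * w x / A ^ 2)) :
    ∃ C, ∀ a, 0 < a → a ≤ A / 2 → ∫ x, exp (-w x / a ^ 2) ≤ C * a ^ finrank ℝ E := by
  set d := finrank ℝ E
  set D : ℝ := d ! * (A / δ) ^ d
  refine ⟨∑ i, (π / c i) ^ (d / 2 : ℝ) + D * ∫ x, exp (-2 * w x / A ^ 2), fun a ha haA => ?_⟩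
  have hgauss : ∀ i, Integrable fun x => exp (-(c i / a ^ 2) * ‖x - xs i‖ ^ 2) := fun i =>
    integrable_exp_neg_mul_sq_norm_sub (by have := hc i; positivity) (xs i)
  calc ∫ x, exp (-w x / a ^ 2)
      ≤ ∫ x, (∑ i, exp (-(c i / a ^ 2) * ‖x - xs i‖ ^ 2) + D * a ^ d * exp (-2 * w x / A ^ 2)) :=
        integral_mono_of_nonneg (ae_of_all _ fun x => (exp_pos _).le)
          ((integrable_finsetSum _ fun i _ => hgauss i).add (hA.const_mul _))
          (ae_of_all _ (exp_neg_div_sq_le_sum_add hδ hquad hgap ha haA d))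
    _ = ∑ i, (π / c i) ^ (d / 2 : ℝ) * a ^ d + D * a ^ d * ∫ x, exp (-2 * w x / A ^ 2) := by
        rw [integral_add (integrable_finsetSum _ fun i _ => hgauss i) (hA.const_mul _),
          integral_finsetSum _ fun i _ => hgauss i, integral_const_mul]
        simp only [integral_exp_neg_div_sq_mul_sq_norm_sub (hc _) ha, d]
    _ = _ := by rw [← Finset.sum_mul]; ring

lemma exists_integral_exp_neg_div_sq_le_mul_pow {ι : Type*} [Fintype ι] {V : E → ℝ}
    {Vstar A : ℝ} {xs : ι → E} (hV : ContDiff ℝ 2 V) (hVco : Tendsto V (cocompact E) atTop)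
    (hlow : ∀ x, Vstar ≤ V x) (hxs : ∀ i, V (xs i) = Vstar)
    (hargmin : ∀ x, V x = Vstar → ∃ i, x = xs i)
    (hhess : ∀ i, ∀ v ≠ 0, 0 < iteratedFDeriv ℝ 2 V (xs i) ![v, v])
    (hA : Integrable fun x => exp (-2 * (V x - Vstar) / A ^ 2)) :
    ∃ C, ∀ a, 0 < a → a ≤ A / 2 → ∫ x, exp (-(V x - Vstar) / a ^ 2) ≤ C * a ^ finrank ℝ E := by
  choose r hr c hc hquad using fun i => exists_mul_sq_norm_le_sub_of_isLocalMin hV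
    (Eventually.of_forall fun y => (hxs i).symm ▸ hlow y) (hhess i)
  obtain ⟨δ, hδ, hgap⟩ := exists_pos_add_le_of_tendsto_cocompact hV.continuous hVco
    (isClosed_iInter fun i => isClosed_le continuous_const (continuous_id.dist continuous_const))
    (m := Vstar) (F := ⋂ i, {x | r i ≤ dist x (xs i)}) fun x hx => (hlow x).lt_of_ne fun hx' => by
      obtain ⟨i, rfl⟩ := hargmin x hx'.symm
      simpa using (hr i).trans_le (mem_iInter.1 hx i)
  exact integral_exp_neg_div_sq_le_mul_pow (w := fun x => V x - Vstar) hc hδ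
    (fun i x hx => by simpa [hxs] using hquad i x hx)
    (fun x hx => le_sub_iff_add_le'.2 (hgap x (mem_iInter.2 hx))) hA

end Laplace

section PartitionFunction

variable {E : Type*} [MeasureSpace E]

/-- The paper's `Z_a⁻¹`, written with `w = V - V*`. -/
def partitionFn (w : E → ℝ) (a : ℝ) : ℝ := ∫ x, exp (-2 * w x / a ^ 2)

variable {w : E → ℝ}

lemma integrable_exp_neg_two_mul_div_sq_of_le {a A : ℝ} (hw : Measurable w) (hw0 : ∀ x, 0 ≤ w x)
    (ha : 0 < a) (haA : a ≤ A) (hA : Integrable fun x => exp (-2 * w x / A ^ 2)) :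
    Integrable fun x => exp (-2 * w x / a ^ 2) :=
  integrable_exp_of_le hA (by fun_prop) fun x => by
    simpa only [neg_mul] using neg_div_sq_le_neg_div_sq (by linarith [hw0 x]) ha haA

lemma monotoneOn_partitionFn {A : ℝ} (hw : Measurable w) (hw0 : ∀ x, 0 ≤ w x)
    (hA : Integrable fun x => exp (-2 * w x / A ^ 2)) : MonotoneOn (partitionFn w) (Ioc 0 A) :=
  fun a ha b hb hab => integral_mono
    (integrable_exp_neg_two_mul_div_sq_of_le hw hw0 ha.1 ha.2 hA)
    (integrable_exp_neg_two_mul_div_sq_of_le hw hw0 hb.1 hb.2 hA)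
    fun x => exp_le_exp.2 <| by
      simpa only [neg_mul] using neg_div_sq_le_neg_div_sq (by linarith [hw0 x]) ha.1 hab

lemma integrable_exp_neg_div_sq_of_le_half {b A : ℝ} (hw : Measurable w) (hw0 : ∀ x, 0 ≤ w x)
    (hb : 0 < b) (hbA : b ≤ A / 2) (hA : Integrable fun x => exp (-2 * w x / A ^ 2)) :
    Integrable fun x => exp (-w x / b ^ 2) :=
  integrable_exp_of_le hA (by fun_prop) fun x => by
    rw [neg_mul, neg_div, neg_div, neg_le_neg_iff, div_le_div_iff₀ (by nlinarith) (by positivity)]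
    nlinarith [mul_le_mul_of_nonneg_left (show (2 * b) ^ 2 ≤ A ^ 2 by nlinarith) (hw0 x),
      mul_nonneg (hw0 x) (sq_nonneg b)]

lemma partitionFn_sub_le {s b : ℝ} (hw : Measurable w) (hw0 : ∀ x, 0 ≤ w x) (hs : 0 < s)
    (hsb : s ≤ b) (hb : Integrable fun x => exp (-w x / b ^ 2)) :
    partitionFn w b - partitionFn w s ≤ 4 * (b - s) * b / s ^ 2 * ∫ x, exp (-w x / b ^ 2) := by
  have hb2 : Integrable fun x => exp (-2 * w x / b ^ 2) := integrable_exp_of_le hb (by fun_prop)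
    fun x => by
      rw [neg_mul, neg_div, neg_div, neg_le_neg_iff]
      exact div_le_div_of_nonneg_right (by linarith [hw0 x]) (sq_nonneg b)
  have hs2 := integrable_exp_neg_two_mul_div_sq_of_le hw hw0 hs hsb hb2
  rw [partitionFn, partitionFn, ← integral_sub hb2 hs2, ← integral_const_mul]
  exact integral_mono (hb2.sub hs2) (hb.const_mul _) fun x =>
    exp_neg_two_mul_div_sq_sub_le (hw0 x) hs hsb

lemma partitionFn_sub_le_mul_pow {d : ℕ} {s b κ C : ℝ} (hd : 1 ≤ d) (hw : Measurable w)
    (hw0 : ∀ x, 0 ≤ w x) (hs : 0 < s) (hsb : s ≤ b) (hbκ : b ≤ κ * s)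
    (hb : Integrable fun x => exp (-w x / b ^ 2)) (hJ : ∫ x, exp (-w x / b ^ 2) ≤ C * b ^ d) :
    partitionFn w b - partitionFn w s ≤ 4 * C * κ ^ (d + 1) * s ^ (d - 1) * (b - s) := by
  have hb0 : 0 < b := hs.trans_le hsb
  have hC : 0 ≤ C := nonneg_of_mul_nonneg_left
    ((integral_nonneg fun x => (exp_pos _).le).trans hJ) (by positivity)
  have hbs : 0 ≤ b - s := sub_nonneg.2 hsb
  obtain ⟨k, rfl⟩ := Nat.exists_eq_add_of_le' hd
  calc partitionFn w b - partitionFn w s ≤ 4 * (b - s) * b / s ^ 2 * ∫ x, exp (-w x / b ^ 2) :=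
        partitionFn_sub_le hw hw0 hs hsb hb
    _ ≤ 4 * (b - s) * b / s ^ 2 * (C * b ^ (k + 1)) := by gcongr
    _ = 4 * C * (b - s) * b ^ (k + 2) / s ^ 2 := by ring
    _ ≤ 4 * C * (b - s) * (κ * s) ^ (k + 2) / s ^ 2 := by gcongr
    _ = 4 * C * κ ^ (k + 1 + 1) * s ^ (k + 1 - 1) * (b - s) := by
        rw [mul_pow, Nat.add_sub_cancel]; field_simp; ring

end PartitionFunction

section Schedule

variable {A C_T β : ℝ}

lemma Tsched_nonneg (hCT : 0 ≤ C_T) (n : ℕ) : 0 ≤ Tsched C_T β n := by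
  unfold Tsched; positivity

lemma Tsched_lt_succ (hCT : 0 < C_T) (hβ : 0 < 1 + β) (n : ℕ) :
    Tsched C_T β n < Tsched C_T β (n + 1) := by
  have hn : (n : ℝ) < ((n + 1 : ℕ) : ℝ) := by push_cast; linarith
  exact mul_lt_mul_of_pos_left (rpow_lt_rpow (Nat.cast_nonneg n) hn hβ) hCT

lemma Tsched_succ_le (hCT : 0 ≤ C_T) (hβ : 0 ≤ 1 + β) {n : ℕ} (hn : 1 ≤ n) :
    Tsched C_T β (n + 1) ≤ 2 ^ (1 + β) * Tsched C_T β n := by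
  unfold Tsched
  have h : ((n + 1 : ℕ) : ℝ) ≤ 2 * n := by
    push_cast; linarith [(Nat.one_le_cast.2 hn : (1 : ℝ) ≤ n)]
  calc C_T * ((n + 1 : ℕ) : ℝ) ^ (1 + β) ≤ C_T * (2 * n) ^ (1 + β) := by gcongr
    _ = 2 ^ (1 + β) * (C_T * (n : ℝ) ^ (1 + β)) := by
        rw [mul_rpow zero_le_two (Nat.cast_nonneg n)]; ring

lemma one_le_log_add_exp_one {t : ℝ} (ht : 0 ≤ t) : 1 ≤ log (t + exp 1) :=
  (le_log_iff_exp_le (by positivity)).2 (by linarith)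

lemma aSeq_pos (hA : 0 < A) (hCT : 0 ≤ C_T) (n : ℕ) : 0 < aSeq A C_T β n :=
  div_pos hA (sqrt_pos.2 (one_pos.trans_le (one_le_log_add_exp_one (Tsched_nonneg hCT n))))

lemma aSeq_le (hA : 0 ≤ A) (hCT : 0 ≤ C_T) (n : ℕ) : aSeq A C_T β n ≤ A :=
  div_le_self hA (one_le_sqrt.2 (one_le_log_add_exp_one (Tsched_nonneg hCT n)))

lemma aSeq_succ_lt (hA : 0 < A) (hCT : 0 < C_T) (hβ : 0 < 1 + β) (n : ℕ) :
    aSeq A C_T β (n + 1) < aSeq A C_T β n := by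
  have hT := Tsched_nonneg (β := β) hCT.le n
  have hlog := one_le_log_add_exp_one hT
  exact div_lt_div_of_pos_left hA (by positivity) <| sqrt_lt_sqrt (by linarith) <|
    log_lt_log (by positivity) (by linarith [Tsched_lt_succ hCT hβ n])

lemma aSeq_le_mul_aSeq_succ (hA : 0 ≤ A) (hCT : 0 ≤ C_T) (hβ : 0 ≤ 1 + β) {n : ℕ} (hn : 1 ≤ n) :
    aSeq A C_T β n ≤ √(1 + (1 + β) * log 2) * aSeq A C_T β (n + 1) := by
  set L := log (Tsched C_T β n + exp 1)
  set L' := log (Tsched C_T β (n + 1) + exp 1)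
  have hL : 1 ≤ L := one_le_log_add_exp_one (Tsched_nonneg hCT n)
  have hL' : 1 ≤ L' := one_le_log_add_exp_one (Tsched_nonneg hCT (n + 1))
  have hT := Tsched_nonneg (β := β) hCT n
  have hlog2 : 0 ≤ log 2 := log_nonneg one_le_two
  have hLL' : L' ≤ (1 + (1 + β) * log 2) * L := by
    have : L' ≤ log (2 ^ (1 + β) * (Tsched C_T β n + exp 1)) := by
      refine log_le_log (by linarith [Tsched_nonneg (β := β) hCT (n + 1), exp_pos 1]) ?_
      nlinarith [Tsched_succ_le hCT hβ hn, one_le_rpow one_le_two hβ, exp_pos 1]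
    rw [log_mul (by positivity) (by positivity), log_rpow two_pos] at this
    nlinarith [mul_nonneg hβ hlog2]
  have hsqrt : √L' ≤ √(1 + (1 + β) * log 2) * √L := by
    rw [← sqrt_mul (by positivity)]
    exact sqrt_le_sqrt hLL'
  unfold aSeq
  rw [← mul_div_assoc, div_le_div_iff₀ (by positivity) (by positivity)]
  nlinarith [mul_le_mul_of_nonneg_left hsqrt hA]

lemma tendsto_aSeq_zero (hCT : 0 < C_T) (hβ : 0 < 1 + β) :
    Tendsto (aSeq A C_T β) atTop (𝓝 0) := by
  have hT : Tendsto (Tsched C_T β) atTop atTop :=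
    ((tendsto_rpow_atTop hβ).comp tendsto_natCast_atTop_atTop).const_mul_atTop hCT
  exact tendsto_const_nhds.div_atTop <| tendsto_sqrt_atTop.comp <|
    tendsto_log_atTop.comp (tendsto_atTop_add_const_right _ _ hT)

end Schedule

lemma exists_pos_le_mul_of_eventually_le {f g : ℕ → ℝ} {C₁ : ℝ} (hf : ∀ n, 0 ≤ f n)
    (hg : ∀ n, 0 < g n) (h : ∀ᶠ n in atTop, f n ≤ C₁ * g n) : ∃ C > 0, ∀ n, f n ≤ C * g n := by
  obtain ⟨C, hC, hle⟩ := Asymptotics.bound_of_isBigO_nat_atTop <|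
    Asymptotics.IsBigO.of_bound (f := f) (g := g) C₁ <|
      h.mono fun n hn => by rwa [norm_of_nonneg (hf n), norm_of_nonneg (hg n).le]
  refine ⟨C, hC, fun n => ?_⟩
  simpa only [norm_of_nonneg (hf n), norm_of_nonneg (hg n).le] using hle (hg n).ne'

theorem normalization_monotone_and_diff_le_general {d m : ℕ} (V : Euc d → ℝ) (A C_T β Vstar : ℝ) (xs : Fin m → Euc d)
    (hd : 1 ≤ d) (hA : 0 < A) (hCT : 0 < C_T) (hβ : 0 < β)
    (hV : ContDiff ℝ 2 V)
    (hVco : Tendsto V (cocompact (Euc d)) atTop)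
    (hlow : ∀ x, Vstar ≤ V x) (hxs : ∀ i, V (xs i) = Vstar)
    (hargmin : ∀ x, V x = Vstar → ∃ i, x = xs i)
    (hhess : ∀ i, ∀ v : Euc d, v ≠ 0 → 0 < hessQuad V (xs i) v)
    (hint : Integrable (fun x : Euc d => ‖x‖ ^ 2 * Real.exp (-2 * V x / A ^ 2)))
    :
    MonotoneOn (fun a : ℝ => ∫ x : Euc d, Real.exp (-2 * (V x - Vstar) / a ^ 2))
        (Set.Ioc (0 : ℝ) A) ∧
      ∃ C > 0, ∀ n : ℕ, 1 ≤ n →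
        0 ≤ (∫ x : Euc d, Real.exp (-2 * (V x - Vstar) / aSeq A C_T β n ^ 2)) -
            (∫ x : Euc d, Real.exp (-2 * (V x - Vstar) / aSeq A C_T β (n + 1) ^ 2)) ∧
        (∫ x : Euc d, Real.exp (-2 * (V x - Vstar) / aSeq A C_T β n ^ 2)) -
            (∫ x : Euc d, Real.exp (-2 * (V x - Vstar) / aSeq A C_T β (n + 1) ^ 2)) ≤
          C * aSeq A C_T β (n + 1) ^ (d - 1) * (aSeq A C_T β n - aSeq A C_T β (n + 1)) := by
  set w : Euc d → ℝ := fun x => V x - Vstar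
  set a := aSeq A C_T β
  set κ := √(1 + (1 + β) * log 2)
  show MonotoneOn (partitionFn w) (Ioc 0 A) ∧ ∃ C > 0, ∀ n : ℕ, 1 ≤ n →
    0 ≤ partitionFn w (a n) - partitionFn w (a (n + 1)) ∧
    partitionFn w (a n) - partitionFn w (a (n + 1)) ≤ C * a (n + 1) ^ (d - 1) * (a n - a (n + 1))
  have hw : Measurable w := (hV.continuous.sub continuous_const).measurable
  have hw0 : ∀ x, 0 ≤ w x := fun x => sub_nonneg.2 (hlow x)
  have hwA := integrable_exp_neg_two_mul_sub_div_sq hV.continuous.measurable hlow hint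
  have hβ' : 0 < 1 + β := by linarith
  have hmono := monotoneOn_partitionFn hw hw0 hwA
  have ha : ∀ n, a n ∈ Ioc 0 A := fun n => ⟨aSeq_pos hA hCT.le n, aSeq_le hA.le hCT.le n⟩
  have hstep : ∀ n, 0 ≤ partitionFn w (a n) - partitionFn w (a (n + 1)) := fun n =>
    sub_nonneg.2 <| hmono (ha (n + 1)) (ha n) (aSeq_succ_lt hA hCT hβ' n).le
  obtain ⟨C₀, hJ⟩ := exists_integral_exp_neg_div_sq_le_mul_pow hV hVco hlow hxs hargmin hhess hwA
  rw [finrank_euclideanSpace_fin] at hJ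
  have hev : ∀ᶠ n in atTop, partitionFn w (a n) - partitionFn w (a (n + 1)) ≤
      4 * C₀ * κ ^ (d + 1) * (a (n + 1) ^ (d - 1) * (a n - a (n + 1))) := by
    filter_upwards [(tendsto_aSeq_zero hCT hβ').eventually (ge_mem_nhds (half_pos hA)),
      eventually_ge_atTop 1] with n hsmall hn
    rw [← mul_assoc]
    exact partitionFn_sub_le_mul_pow hd hw hw0 (ha (n + 1)).1 (aSeq_succ_lt hA hCT hβ' n).le
      (aSeq_le_mul_aSeq_succ hA.le hCT.le hβ'.le hn)
      (integrable_exp_neg_div_sq_of_le_half hw hw0 (ha n).1 hsmall hwA) (hJ _ (ha n).1 hsmall)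
  obtain ⟨C, hC, hle⟩ := exists_pos_le_mul_of_eventually_le hstep (fun n =>
    mul_pos (pow_pos (ha (n + 1)).1 _) (sub_pos.2 (aSeq_succ_lt hA hCT hβ' n))) hev
  exact ⟨hmono, C, hC, fun n _ => ⟨hstep n, (hle n).trans_eq (mul_assoc _ _ _).symm⟩⟩

/-- `a ↦ Z_a^{−1}` is non-decreasing on `(0, A]`, and there is `C > 0` with
`0 ≤ Z_{a_n}^{−1} − Z_{a_{n+1}}^{−1} ≤ C a_{n+1}^{d−1}(a_n − a_{n+1})` for all `n ≥ 1`. -/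
theorem normalization_monotone_and_diff_le {d m : ℕ} (V : Euc d → ℝ) (A C_T β Vstar : ℝ) (xs : Fin m → Euc d)
    (hd : 1 ≤ d) (hA : 0 < A) (hCT : 0 < C_T) (hβ : 0 < β)
    (hV : ContDiff ℝ 2 V) (hVpos : ∀ x, 0 < V x)
    (hVco : Tendsto V (cocompact (Euc d)) atTop)
    (hm : 1 ≤ m) (hinj : Function.Injective xs)
    (hVstar : 0 < Vstar)
    (hlow : ∀ x, Vstar ≤ V x) (hxs : ∀ i, V (xs i) = Vstar)
    (hargmin : ∀ x, V x = Vstar → ∃ i, x = xs i)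
    (hhess : ∀ i, ∀ v : Euc d, v ≠ 0 → 0 < hessQuad V (xs i) v)
    (hint : Integrable (fun x : Euc d => ‖x‖ ^ 2 * Real.exp (-2 * V x / A ^ 2)))
    :
    MonotoneOn (fun a : ℝ => ∫ x : Euc d, Real.exp (-2 * (V x - Vstar) / a ^ 2))
        (Set.Ioc (0 : ℝ) A) ∧
      ∃ C > 0, ∀ n : ℕ, 1 ≤ n →
        0 ≤ (∫ x : Euc d, Real.exp (-2 * (V x - Vstar) / aSeq A C_T β n ^ 2)) -
            (∫ x : Euc d, Real.exp (-2 * (V x - Vstar) / aSeq A C_T β (n + 1) ^ 2)) ∧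
        (∫ x : Euc d, Real.exp (-2 * (V x - Vstar) / aSeq A C_T β n ^ 2)) -
            (∫ x : Euc d, Real.exp (-2 * (V x - Vstar) / aSeq A C_T β (n + 1) ^ 2)) ≤
          C * aSeq A C_T β (n + 1) ^ (d - 1) * (aSeq A C_T β n - aSeq A C_T β (n + 1)) :=
  normalization_monotone_and_diff_le_general V A C_T β Vstar xs hd hA hCT hβ hV hVco hlow hxs
    hargmin hhess hint
end
end

section
/- One has n^{1+β}·γ_{N(T_n)} → 0 as n → ∞, i.e. γ_{N(T_n)} = o(n^{−(1+β)}). -/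
open Filter

noncomputable section

/-- `Γ_n = γ₁ + ⋯ + γ_n`. -/
def Gam (γ : ℕ → ℝ) (n : ℕ) : ℝ := ∑ k ∈ Finset.range n, γ (k + 1)

/-- `N(t) = max { k : Γ_k ≤ t }`. -/
def Nfun (γ : ℕ → ℝ) (t : ℝ) : ℕ := sSup {k : ℕ | Gam γ k ≤ t}

lemma gmono_aux (γ : ℕ → ℝ) (hmono : ∀ n ≥ 1, γ (n + 1) ≤ γ n) :
    ∀ a b, 1 ≤ a → a ≤ b → γ b ≤ γ a := by
  intro a b ha hab
  induction b with
  | zero => omega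
  | succ b ih =>
    rcases Nat.lt_or_ge a (b + 1) with h | h
    · exact le_trans (hmono b (by omega)) (ih (by omega))
    · have : a = b + 1 := by omega
      subst this; exact le_rfl

lemma gam_nonneg (γ : ℕ → ℝ) (hpos : ∀ n ≥ 1, 0 < γ n) (n : ℕ) : 0 ≤ Gam γ n :=
  Finset.sum_nonneg fun k _ => (hpos (k + 1) (by omega)).le

lemma key_lemma (γ : ℕ → ℝ) (hpos : ∀ n ≥ 1, 0 < γ n)
    (hmono : ∀ n ≥ 1, γ (n + 1) ≤ γ n)
    (hlim : Tendsto γ atTop (nhds 0))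
    (hsq : Summable fun n => γ (n + 1) ^ 2) :
    Tendsto (fun n => Gam γ (n + 1) * γ n) atTop (nhds 0) := by
  rw [Metric.tendsto_atTop]
  intro ε hε
  have htail := tendsto_sum_nat_add (fun n => γ (n + 1) ^ 2)
  obtain ⟨m, hm⟩ := (Metric.tendsto_atTop.1 htail) (ε / 4) (by linarith)
  have hm := hm m le_rfl
  rw [Real.dist_eq, sub_zero] at hm
  have hshift : Summable fun j => γ (j + m + 1) ^ 2 :=
    (summable_nat_add_iff m).2 hsq
  have hSnn : 0 ≤ ∑' k, γ (k + m + 1) ^ 2 := tsum_nonneg fun k => sq_nonneg _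
  have hS : (∑' k, γ (k + m + 1) ^ 2) < ε / 4 := by
    rwa [abs_of_nonneg hSnn] at hm
  have hGnn : 0 ≤ Gam γ m := gam_nonneg γ hpos m
  have hGm : 0 < Gam γ m + 1 := by linarith
  obtain ⟨n₀, hn₀⟩ := (Metric.tendsto_atTop.1 hlim) (ε / (2 * (Gam γ m + 1)))
    (by positivity)
  refine ⟨max n₀ (m + 1), fun n hn => ?_⟩
  have hn1 : n₀ ≤ n := le_trans (le_max_left _ _) hn
  have hn2 : m + 1 ≤ n := le_trans (le_max_right _ _) hn
  have hγn : 0 < γ n := hpos n (by omega)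
  have hγsmall : γ n < ε / (2 * (Gam γ m + 1)) := by
    have := hn₀ n hn1
    rwa [Real.dist_eq, sub_zero, abs_of_pos hγn] at this
  rw [Real.dist_eq, sub_zero, abs_of_nonneg (mul_nonneg (gam_nonneg γ hpos _) hγn.le)]
  -- split the sum
  have hmn : m ≤ n + 1 := by omega
  have hmn' : m ≤ n := by omega
  have hsplit : Gam γ (n + 1) * γ n =
      (∑ k ∈ Finset.range m, γ (k + 1) * γ n) +
      ((∑ k ∈ Finset.Ico m n, γ (k + 1) * γ n) + γ (n + 1) * γ n) := by
    rw [Gam, Finset.sum_mul, ← Finset.sum_range_add_sum_Ico _ hmn,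
      Finset.sum_Ico_succ_top hmn']
  rw [hsplit]
  -- bound the first part
  have hA : (∑ k ∈ Finset.range m, γ (k + 1) * γ n) < ε / 2 := by
    have h1 : (∑ k ∈ Finset.range m, γ (k + 1) * γ n) = Gam γ m * γ n := by
      rw [Gam, Finset.sum_mul]
    rw [h1]
    have h2 : Gam γ m * γ n ≤ (Gam γ m + 1) * γ n :=
      mul_le_mul_of_nonneg_right (by linarith) hγn.le
    have h3 : (Gam γ m + 1) * γ n < (Gam γ m + 1) * (ε / (2 * (Gam γ m + 1))) :=
      mul_lt_mul_of_pos_left hγsmall hGm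
    have h4 : (Gam γ m + 1) * (ε / (2 * (Gam γ m + 1))) = ε / 2 := by
      field_simp
    linarith
  -- bound the middle part
  have hB1 : (∑ k ∈ Finset.Ico m n, γ (k + 1) * γ n) ≤ ∑' k, γ (k + m + 1) ^ 2 := by
    have step1 : (∑ k ∈ Finset.Ico m n, γ (k + 1) * γ n) ≤
        ∑ k ∈ Finset.Ico m n, γ (k + 1) ^ 2 := by
      apply Finset.sum_le_sum
      intro k hk
      rw [Finset.mem_Ico] at hk
      have hle : γ n ≤ γ (k + 1) := gmono_aux γ hmono (k + 1) n (by omega) (by omega)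
      have hp : 0 < γ (k + 1) := hpos (k + 1) (by omega)
      calc γ (k + 1) * γ n ≤ γ (k + 1) * γ (k + 1) :=
            mul_le_mul_of_nonneg_left hle hp.le
        _ = γ (k + 1) ^ 2 := by ring
    have step2 : (∑ k ∈ Finset.Ico m n, γ (k + 1) ^ 2) =
        ∑ k ∈ Finset.range (n - m), γ (k + m + 1) ^ 2 := by
      rw [Finset.sum_Ico_eq_sum_range]
      apply Finset.sum_congr rfl
      intro k _
      congr 2
      omega
    have step3 : (∑ k ∈ Finset.range (n - m), γ (k + m + 1) ^ 2) ≤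
        ∑' k, γ (k + m + 1) ^ 2 :=
      Summable.sum_le_tsum _ (fun k _ => sq_nonneg _) hshift
    linarith
  have hB2 : γ (n + 1) * γ n ≤ ∑' k, γ (k + m + 1) ^ 2 := by
    have h1 : γ (n + 1) * γ n ≤ γ n ^ 2 := by
      have := hmono n (by omega)
      nlinarith
    have h2 : γ n ^ 2 = γ ((n - 1 - m) + m + 1) ^ 2 := by
      congr 2
      omega
    have h3 : γ ((n - 1 - m) + m + 1) ^ 2 ≤ ∑' k, γ (k + m + 1) ^ 2 :=
      Summable.le_tsum hshift (n - 1 - m) (fun k _ => sq_nonneg _)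
    linarith
  linarith

/-- with `T_n = C_T n^{1+β}`, one has `γ_{N(T_n)} = o(n^{−(1+β)})`. -/
theorem gamma_N_T_littleO (γ : ℕ → ℝ) (C_T β : ℝ) (hCT : 0 < C_T) (hβ : 0 < β)
    (hpos : ∀ n ≥ 1, 0 < γ n)
    (hmono : ∀ n ≥ 1, γ (n + 1) ≤ γ n)
    (hlim : Tendsto γ atTop (nhds 0))
    (hdiv : Tendsto (Gam γ) atTop atTop)
    (hsq : Summable fun n => γ (n + 1) ^ 2) :
    Tendsto (fun n : ℕ => (n : ℝ) ^ (1 + β) * γ (Nfun γ (C_T * (n : ℝ) ^ (1 + β))))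
      atTop (nhds 0) := by
  set T : ℕ → ℝ := fun n => C_T * (n : ℝ) ^ (1 + β) with hTdef
  have hTnonneg : ∀ n, 0 ≤ T n := fun n =>
    mul_nonneg hCT.le (Real.rpow_nonneg (Nat.cast_nonneg n) _)
  have hbdd : ∀ t : ℝ, BddAbove {k : ℕ | Gam γ k ≤ t} := by
    intro t
    obtain ⟨K, hK⟩ := eventually_atTop.1 (hdiv.eventually_gt_atTop t)
    refine ⟨K, fun k hk => ?_⟩
    by_contra h
    push_neg at h
    exact absurd hk (not_le.2 (hK k h.le))
  have hne : ∀ t : ℝ, 0 ≤ t → (0 : ℕ) ∈ {k : ℕ | Gam γ k ≤ t} := by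
    intro t ht
    simp only [Set.mem_setOf_eq, Gam, Finset.range_zero, Finset.sum_empty]
    exact ht
  have hN1 : ∀ t : ℝ, 0 ≤ t → Gam γ (Nfun γ t) ≤ t := fun t ht =>
    Nat.sSup_mem ⟨0, hne t ht⟩ (hbdd t)
  have hN2 : ∀ t : ℝ, 0 ≤ t → t < Gam γ (Nfun γ t + 1) := by
    intro t ht
    by_contra h
    push_neg at h
    have : Nfun γ t + 1 ≤ Nfun γ t := le_csSup (hbdd t) h
    omega
  have hTtop : Tendsto T atTop atTop := by
    have h1 : Tendsto (fun x : ℝ => x ^ (1 + β)) atTop atTop :=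
      tendsto_rpow_atTop (by linarith)
    exact (h1.comp tendsto_natCast_atTop_atTop).const_mul_atTop hCT
  have hNtop : Tendsto (fun n => Nfun γ (T n)) atTop atTop := by
    rw [tendsto_atTop]
    intro k
    filter_upwards [hTtop.eventually_ge_atTop (Gam γ k)] with n hn
    exact le_csSup (hbdd (T n)) hn
  have hupper : Tendsto
      (fun n => Gam γ (Nfun γ (T n) + 1) * γ (Nfun γ (T n)) / C_T) atTop (nhds 0) := by
    have h := (key_lemma γ hpos hmono hlim hsq).comp hNtop
    have := h.div_const C_T
    simpa using this
  apply squeeze_zero' (g := fun n => Gam γ (Nfun γ (T n) + 1) * γ (Nfun γ (T n)) / C_T)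
  · filter_upwards [hNtop.eventually_ge_atTop 1] with n hn
    exact mul_nonneg (Real.rpow_nonneg (Nat.cast_nonneg n) _) (hpos _ hn).le
  · filter_upwards [hNtop.eventually_ge_atTop 1] with n hn
    have hγN : 0 ≤ γ (Nfun γ (T n)) := (hpos _ hn).le
    have h2 : T n < Gam γ (Nfun γ (T n) + 1) := hN2 _ (hTnonneg n)
    have heq : (n : ℝ) ^ (1 + β) * γ (Nfun γ (T n)) = T n * γ (Nfun γ (T n)) / C_T := by
      rw [hTdef]
      field_simp
    calc (n : ℝ) ^ (1 + β) * γ (Nfun γ (C_T * (n : ℝ) ^ (1 + β)))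
        = T n * γ (Nfun γ (T n)) / C_T := heq
      _ ≤ Gam γ (Nfun γ (T n) + 1) * γ (Nfun γ (T n)) / C_T := by
          have h3 := mul_le_mul_of_nonneg_right h2.le hγN
          exact (div_le_div_iff_of_pos_right hCT).2 h3
  · exact hupper
end
end

section
/- For every T > 0, the collection of ratios γ_{N(T_{n+1}−T)}/γ_{N(T_{n+1})}, over all n with T_{n+1} > T, is bounded. -/
open Filter

noncomputable section

/-- with `T_n = C_T n^{1+β}`, for every `T > 0` the ratios
`γ_{N(T_{n+1}−T)} / γ_{N(T_{n+1})}`, over all `n` with `T_{n+1} > T`, are bounded. -/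
theorem gamma_N_ratio_bounded (γ : ℕ → ℝ) (C_T β : ℝ) (hCT : 0 < C_T) (hβ : 0 < β)
    (hpos : ∀ n ≥ 1, 0 < γ n)
    (hmono : ∀ n ≥ 1, γ (n + 1) ≤ γ n)
    (hlim : Tendsto γ atTop (nhds 0))
    (hdiv : Tendsto (Gam γ) atTop atTop)
    (hsq : Summable fun n => γ (n + 1) ^ 2)
    (hvarpi : ∃ c : ℝ, ∀ᶠ n : ℕ in atTop, (γ n - γ (n + 1)) / γ (n + 1) ^ 2 ≤ c) :
    ∀ T > 0, ∃ M : ℝ, ∀ n : ℕ, T < C_T * ((n : ℝ) + 1) ^ (1 + β) →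
      γ (Nfun γ (C_T * ((n : ℝ) + 1) ^ (1 + β) - T)) / γ (Nfun γ (C_T * ((n : ℝ) + 1) ^ (1 + β))) ≤ M := by
  intro T hT
  -- antitone of γ on indices ≥ 1
  have hanti : ∀ a b : ℕ, 1 ≤ a → a ≤ b → γ b ≤ γ a := by
    intro a b ha hab
    induction b with
    | zero => omega
    | succ b ih =>
      rcases Nat.lt_or_ge a (b + 1) with h | h
      · exact le_trans (hmono b (by omega)) (ih (by omega))
      · have : a = b + 1 := by omega
        simp [this]
  have hGamsucc : ∀ k, Gam γ (k + 1) = Gam γ k + γ (k + 1) := by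
    intro k; exact Finset.sum_range_succ _ _
  have hGam0 : ∀ k, 0 ≤ Gam γ k := by
    intro k
    apply Finset.sum_nonneg
    intro i _
    exact (hpos (i + 1) (by omega)).le
  have hGamMono : ∀ k l : ℕ, k ≤ l → Gam γ k ≤ Gam γ l := by
    intro k l hkl
    apply Finset.sum_le_sum_of_subset_of_nonneg (Finset.range_subset_range.2 hkl)
    intro i _ _
    exact (hpos (i + 1) (by omega)).le
  -- basic properties of Nfun
  have hSne : ∀ t : ℝ, 0 ≤ t → (({k : ℕ | Gam γ k ≤ t}).Nonempty) := by
    intro t ht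
    exact ⟨0, by simp [Gam, ht]⟩
  have hSbdd : ∀ t : ℝ, BddAbove {k : ℕ | Gam γ k ≤ t} := by
    intro t
    obtain ⟨K, hK⟩ := (hdiv.eventually_gt_atTop t).exists_forall_of_atTop
    refine ⟨K, fun j hj => ?_⟩
    by_contra hjK
    exact absurd hj (not_le.2 (hK j (le_of_not_ge hjK)))
  have hNmem : ∀ t : ℝ, 0 ≤ t → Gam γ (Nfun γ t) ≤ t := by
    intro t ht
    exact Nat.sSup_mem (hSne t ht) (hSbdd t)
  have hNge : ∀ t : ℝ, ∀ j : ℕ, Gam γ j ≤ t → j ≤ Nfun γ t := by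
    intro t j hj
    exact le_csSup (hSbdd t) hj
  have hNlt : ∀ t : ℝ, 0 ≤ t → t < Gam γ (Nfun γ t + 1) := by
    intro t ht
    by_contra h
    have := hNge t (Nfun γ t + 1) (le_of_not_gt h)
    omega
  -- extract the constant c and threshold n₀
  obtain ⟨c₀, hc₀⟩ := hvarpi
  rw [eventually_atTop] at hc₀
  obtain ⟨n₀', hc₀⟩ := hc₀
  set c : ℝ := max c₀ 0 with hc_def
  have hc_nonneg : 0 ≤ c := le_max_right _ _
  set n₀ : ℕ := max n₀' 1 with hn₀_def
  have hn₀1 : 1 ≤ n₀ := le_max_right _ _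
  -- one-step estimate
  have hstep : ∀ j : ℕ, n₀ ≤ j → γ j ≤ γ (j + 1) * Real.exp (c * γ (j + 1)) := by
    intro j hj
    have hj1 : 1 ≤ j := le_trans hn₀1 hj
    have hγ1 : 0 < γ (j + 1) := hpos (j + 1) (by omega)
    have h1 : (γ j - γ (j + 1)) / γ (j + 1) ^ 2 ≤ c :=
      le_trans (hc₀ j (le_trans (le_max_left _ _) hj)) (le_max_left _ _)
    have h2 : γ j - γ (j + 1) ≤ c * γ (j + 1) ^ 2 := by
      rwa [div_le_iff₀ (by positivity)] at h1
    have h3 : γ j ≤ γ (j + 1) * (1 + c * γ (j + 1)) := by nlinarith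
    have h4 : 1 + c * γ (j + 1) ≤ Real.exp (c * γ (j + 1)) := by
      have := Real.add_one_le_exp (c * γ (j + 1))
      linarith
    calc γ j ≤ γ (j + 1) * (1 + c * γ (j + 1)) := h3
      _ ≤ γ (j + 1) * Real.exp (c * γ (j + 1)) :=
        mul_le_mul_of_nonneg_left h4 hγ1.le
  -- telescoped estimate
  have hprod : ∀ m : ℕ, n₀ ≤ m → ∀ k : ℕ, m ≤ k →
      γ m ≤ γ k * Real.exp (c * (Gam γ k - Gam γ m)) := by
    intro m hm k hk
    induction k, hk using Nat.le_induction with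
    | base => simp
    | succ k hmk ih =>
      have hk0 : n₀ ≤ k := le_trans hm hmk
      calc γ m ≤ γ k * Real.exp (c * (Gam γ k - Gam γ m)) := ih
        _ ≤ (γ (k + 1) * Real.exp (c * γ (k + 1))) * Real.exp (c * (Gam γ k - Gam γ m)) :=
            mul_le_mul_of_nonneg_right (hstep k hk0) (Real.exp_nonneg _)
        _ = γ (k + 1) * Real.exp (c * (Gam γ (k + 1) - Gam γ m)) := by
            rw [hGamsucc k, mul_assoc, ← Real.exp_add]
            ring_nf
  -- choose n₁ with C_T * (n₁ + 1) ≥ Gam γ n₀ + T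
  obtain ⟨n₁, hn₁⟩ := exists_nat_ge ((Gam γ n₀ + T) / C_T)
  have hbig : ∀ n : ℕ, n₁ ≤ n → Gam γ n₀ + T ≤ C_T * ((n : ℝ) + 1) ^ (1 + β) := by
    intro n hn
    have h1 : (1 : ℝ) ≤ (n : ℝ) + 1 := by
      have : (0:ℝ) ≤ (n:ℝ) := Nat.cast_nonneg n
      linarith
    have h2 : ((n : ℝ) + 1) ^ (1 : ℝ) ≤ ((n : ℝ) + 1) ^ (1 + β) :=
      Real.rpow_le_rpow_of_exponent_le h1 (by linarith)
    rw [Real.rpow_one] at h2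
    have h3 : (n₁ : ℝ) ≤ (n : ℝ) := Nat.cast_le.2 hn
    have h4 : Gam γ n₀ + T ≤ C_T * ((n : ℝ) + 1) := by
      rw [div_le_iff₀ hCT] at hn₁
      nlinarith
    nlinarith
  set M₀ : ℝ := Real.exp (c * (T + γ 1)) with hM₀_def
  -- main bound for n ≥ n₁
  have hmain : ∀ n : ℕ, n₁ ≤ n →
      γ (Nfun γ (C_T * ((n : ℝ) + 1) ^ (1 + β) - T)) /
        γ (Nfun γ (C_T * ((n : ℝ) + 1) ^ (1 + β))) ≤ M₀ := by
    intro n hn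
    set t : ℝ := C_T * ((n : ℝ) + 1) ^ (1 + β) with ht_def
    have htT : Gam γ n₀ + T ≤ t := hbig n hn
    have htT0 : 0 ≤ t - T := by have := hGam0 n₀; linarith
    have ht0 : 0 ≤ t := by linarith
    set m : ℕ := Nfun γ (t - T) with hm_def
    set k : ℕ := Nfun γ t with hk_def
    have hmn₀ : n₀ ≤ m := hNge _ n₀ (by linarith)
    have hm1 : 1 ≤ m := le_trans hn₀1 hmn₀
    have hmk : m ≤ k := hNge t m (le_trans (hNmem _ htT0) (by linarith))
    have hk1 : 1 ≤ k := le_trans hm1 hmk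
    have hγk : 0 < γ k := hpos k hk1
    have hγm : 0 < γ m := hpos m hm1
    have hGk : Gam γ k ≤ t := hNmem t ht0
    have hGm1 : t - T < Gam γ (m + 1) := hNlt (t - T) htT0
    have hγm1 : γ (m + 1) ≤ γ 1 := hanti 1 (m + 1) le_rfl (by omega)
    have hdiff : Gam γ k - Gam γ m ≤ T + γ 1 := by
      have := hGamsucc m
      nlinarith
    have h1 : γ m ≤ γ k * Real.exp (c * (Gam γ k - Gam γ m)) := hprod m hmn₀ k hmk
    have h2 : Real.exp (c * (Gam γ k - Gam γ m)) ≤ M₀ := by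
      apply Real.exp_le_exp.2
      exact mul_le_mul_of_nonneg_left hdiff hc_nonneg
    rw [div_le_iff₀ hγk]
    calc γ m ≤ γ k * Real.exp (c * (Gam γ k - Gam γ m)) := h1
      _ ≤ γ k * M₀ := mul_le_mul_of_nonneg_left h2 hγk.le
      _ = M₀ * γ k := mul_comm _ _
  -- finite part
  set f : ℕ → ℝ := fun n =>
    γ (Nfun γ (C_T * ((n : ℝ) + 1) ^ (1 + β) - T)) / γ (Nfun γ (C_T * ((n : ℝ) + 1) ^ (1 + β)))
    with hf_def
  obtain ⟨M₁, hM₁⟩ := ((Set.finite_Iio n₁).image f).bddAbove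
  refine ⟨max M₀ M₁, fun n _ => ?_⟩
  rcases Nat.lt_or_ge n n₁ with h | h
  · exact le_trans (hM₁ (Set.mem_image_of_mem f h)) (le_max_right _ _)
  · exact le_trans (hmain n h) (le_max_left _ _)
end
end
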